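/- arXiv:cs/9907001 — 7 statements merged into one kernel-verified Lean document; each statement's English description precedes it below -/
import Mathlib

section
/- The set of parameter vectors p ∈ ℝ^d for which a given spanning tree T is the unique minimum spanning tree under edge weights w(e) = cost(e)·p is exactly the set of solutions of the system of strict linear inequalities (cost(f) − cost(e))·p > 0 over all swaps (e,f) of T; in particular this set is a convex (open polyhedral) subset of ℝ^d. -/
/-!
If `(e, f)` is a swap, `T - e + f` is a spanning tree of weight `w(T) + w(f) - w(e)`, so the swap
inequalities are necessary. Conversely, given a spanning tree `T' ≠ T` and an edge `e ∈ T \ T'`,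
the `T'`-path between the ends of `e` crosses the cut of `T - e` along some `f ∈ T' \ T`; then both
`T - e + f` and `T' - f + e` are spanning trees. If all swap inequalities hold, `T' - f + e` is
strictly lighter than `T'` and has one edge fewer outside `T`, and induction on `|T' \ T|` shows
`w(T) < w(T')`. The solution set of finitely many strict linear inequalities is convex.
-/

open SimpleGraph

/-- Dot product on `ℝ^d`. -/
def dot {d : ℕ} (x y : Fin d → ℝ) : ℝ := ∑ i, x i * y i

/-- `T` is a spanning tree of `G`. -/
def IsSpanningTree {V : Type*} (G T : SimpleGraph V) : Prop :=
  T ≤ G ∧ T.IsTree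

/-- `(e, f)` is a swap for the spanning tree `T` of `G`. -/
def IsSwap {V : Type*} (G T : SimpleGraph V) (e f : Sym2 V) : Prop :=
  e ∈ T.edgeSet ∧ f ∈ G.edgeSet ∧ f ∉ T.edgeSet ∧
    IsSpanningTree G (SimpleGraph.fromEdgeSet ((insert f T.edgeSet) \ {e}))

open scoped Classical in
/-- Total weight of (the edges of) a graph under the parametric weights
`w(e) = cost(e) · p`. -/
noncomputable def paramWeight {V : Type*} [Fintype V] {d : ℕ} (T : SimpleGraph V)
    (cost : Sym2 V → Fin d → ℝ) (p : Fin d → ℝ) : ℝ :=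
  ∑ e ∈ T.edgeFinset, dot (cost e) p

namespace SimpleGraph

variable {V : Type*} {A B : SimpleGraph V}

def edgeSwap (A : SimpleGraph V) (e f : Sym2 V) : SimpleGraph V :=
  fromEdgeSet (insert f A.edgeSet \ {e})

lemma edgeSet_edgeSwap {e f : Sym2 V} (hf : ¬ f.IsDiag) :
    (A.edgeSwap e f).edgeSet = insert f A.edgeSet \ {e} := by
  refine (edgeSet_fromEdgeSet _).trans (sdiff_eq_left.2 (Set.disjoint_left.2 ?_))
  rintro g ⟨rfl | hg, -⟩
  · exact hf
  · exact A.not_isDiag_of_mem_edgeSet hg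

lemma deleteEdges_le_edgeSwap (e f : Sym2 V) : A.deleteEdges {e} ≤ A.edgeSwap e f := by
  intro a b hab
  rw [deleteEdges_adj] at hab
  exact (fromEdgeSet_adj _).2 ⟨⟨Or.inr hab.1, hab.2⟩, hab.1.ne⟩

lemma edgeSwap_adj_of_ne {e : Sym2 V} {u v : V} (huv : u ≠ v) (he : s(u, v) ≠ e) :
    (A.edgeSwap e s(u, v)).Adj u v :=
  (fromEdgeSet_adj _).2 ⟨⟨Or.inl rfl, he⟩, huv⟩

lemma edgeSwap_le {G : SimpleGraph V} {e f : Sym2 V} (hA : A ≤ G) (hf : f ∈ G.edgeSet) :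
    A.edgeSwap e f ≤ G := by
  rw [edgeSwap, fromEdgeSet_le]
  rintro g ⟨⟨rfl | hg, -⟩, -⟩
  · exact hf
  · exact edgeSet_mono hA hg

lemma Preconnected.of_forall_adj_reachable (hA : A.Preconnected)
    (h : ∀ u v, A.Adj u v → B.Reachable u v) : B.Preconnected := fun u v =>
  (reachable_iff_reflTransGen u v).2 <|
    Relation.reflTransGen_closed (fun a b hab => (reachable_iff_reflTransGen a b).1 (h a b hab))
      u v ((reachable_iff_reflTransGen u v).1 (hA u v))

lemma Preconnected.reachable_or_reachable_deleteEdges (hA : A.Preconnected) (x y a : V) :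
    (A.deleteEdges {s(x, y)}).Reachable a x ∨ (A.deleteEdges {s(x, y)}).Reachable a y := by
  by_contra! ha
  obtain ⟨⟨⟨c, d⟩, hcd⟩, -, hc, hd⟩ := (hA x a).some.exists_boundary_dart
    {b | (A.deleteEdges {s(x, y)}).Reachable b x ∨ (A.deleteEdges {s(x, y)}).Reachable b y}
    (Or.inl .rfl) (by simpa using ha)
  by_cases hedge : s(c, d) = s(x, y)
  · rcases Sym2.eq_iff.1 hedge with ⟨-, rfl⟩ | ⟨-, rfl⟩
    exacts [hd (Or.inr .rfl), hd (Or.inl .rfl)]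
  · have hcd' : (A.deleteEdges {s(x, y)}).Adj c d := (deleteEdges_adj ..).2 ⟨hcd, hedge⟩
    exact hd (hc.imp hcd'.symm.reachable.trans hcd'.symm.reachable.trans)

lemma IsTree.ncard_edgeSet_add_one [Finite V] (hA : A.IsTree) :
    A.edgeSet.ncard + 1 = Nat.card V :=
  (isTree_iff_connected_and_card.1 hA).2

lemma IsTree.edgeSwap [Finite V] (hA : A.IsTree) {x y u v : V} (hxy : A.Adj x y)
    (hf : s(u, v) ∉ A.edgeSet) (hsep : ¬ (A.deleteEdges {s(x, y)}).Reachable u v) :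
    (A.edgeSwap s(x, y) s(u, v)).IsTree := by
  have huv : u ≠ v := by
    rintro rfl
    exact hsep .rfl
  have hle := deleteEdges_le_edgeSwap (A := A) s(x, y) s(u, v)
  have hBuv := edgeSwap_adj_of_ne (A := A) huv fun h => hf (h ▸ A.mem_edgeSet.2 hxy)
  -- `u` and `v` lie on different sides of `A - xy`, so the new edge reconnects `x` and `y`
  have hBxy : (A.edgeSwap s(x, y) s(u, v)).Reachable x y := by
    have hsides := hA.connected.preconnected.reachable_or_reachable_deleteEdges x y
    rcases hsides u with hu | hu <;> rcases hsides v with hv | hv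
    · exact absurd (hu.trans hv.symm) hsep
    · exact (hu.mono hle).symm.trans (hBuv.reachable.trans (hv.mono hle))
    · exact (hv.mono hle).symm.trans (hBuv.symm.reachable.trans (hu.mono hle))
    · exact absurd (hu.trans hv.symm) hsep
  rw [isTree_iff_connected_and_card, Nat.card_coe_set_eq, edgeSet_edgeSwap (by simpa using huv),
    Set.ncard_sdiff_singleton_of_mem (Set.mem_insert_of_mem _ (A.mem_edgeSet.2 hxy)),
    Set.ncard_insert_of_notMem hf, Nat.add_sub_cancel, hA.ncard_edgeSet_add_one]
  have := hA.connected.nonempty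
  refine ⟨Connected.mk (hA.connected.preconnected.of_forall_adj_reachable fun a b hab => ?_), rfl⟩
  by_cases h : s(a, b) = s(x, y)
  · rcases Sym2.eq_iff.1 h with ⟨rfl, rfl⟩ | ⟨rfl, rfl⟩
    exacts [hBxy, hBxy.symm]
  · exact (hle ((deleteEdges_adj ..).2 ⟨hab, h⟩)).reachable

lemma IsAcyclic.not_reachable_deleteEdges_of_mem_edges (hA : A.IsAcyclic) {x y : V}
    {p : A.Walk x y} (hp : p.IsPath) {f : Sym2 V} (hf : f ∈ p.edges) :
    ¬ (A.deleteEdges {f}).Reachable x y := by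
  classical
  rintro ⟨q⟩
  have hq : (q.toPath.1.mapLe (deleteEdges_le _)).IsPath := q.toPath.2.mapLe _
  obtain rfl : p = q.toPath.1.mapLe _ :=
    congrArg Subtype.val ((hA.subsingleton_path x y).elim ⟨p, hp⟩ ⟨_, hq⟩)
  rw [Walk.edges_mapLe_eq_edges] at hf
  simpa using q.toPath.1.edges_subset_edgeSet hf

lemma IsTree.exists_mem_edgeSet_notMem [Finite V] (hA : A.IsTree) (hB : B.IsTree) (hne : A ≠ B) :
    ∃ e ∈ A.edgeSet, e ∉ B.edgeSet := by
  by_contra! hsub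
  have hcard := hA.ncard_edgeSet_add_one.trans hB.ncard_edgeSet_add_one.symm
  exact hne (edgeSet_inj.1 (Set.eq_of_subset_of_ncard_le hsub (by omega)))

end SimpleGraph

lemma dot_sub_left {d : ℕ} (x y z : Fin d → ℝ) : dot (x - y) z = dot x z - dot y z :=
  sub_dotProduct x y z

lemma convex_setOf_forall_pos_dot {α β : Type*} {d : ℕ} (P : α → β → Prop)
    (c : α → β → Fin d → ℝ) : Convex ℝ {p : Fin d → ℝ | ∀ a b, P a b → 0 < dot (c a b) p} := by
  refine convex_iff_forall_pos.2 fun p hp q hq s t hs ht _ a b hab => ?_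
  change 0 < c a b ⬝ᵥ (s • p + t • q)
  rw [dotProduct_add, dotProduct_smul, dotProduct_smul, smul_eq_mul, smul_eq_mul]
  exact add_pos (mul_pos hs (hp a b hab)) (mul_pos ht (hq a b hab))

section Swap

variable {V : Type*} {G T T' : SimpleGraph V} {e f : Sym2 V}

lemma IsSwap.edgeSwap_ne (h : IsSwap G T e f) : T.edgeSwap e f ≠ T := by
  obtain ⟨heT, hfG, hfT, -⟩ := h
  intro hT
  apply hfT
  rw [← hT, edgeSet_edgeSwap (G.not_isDiag_of_mem_edgeSet hfG)]
  exact ⟨Set.mem_insert _ _, fun hfe => hfT (hfe ▸ heT)⟩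

open scoped Classical in
lemma IsSwap.paramWeight_edgeSwap [Fintype V] {d : ℕ} (h : IsSwap G T e f)
    (cost : Sym2 V → Fin d → ℝ) (p : Fin d → ℝ) :
    paramWeight (T.edgeSwap e f) cost p = paramWeight T cost p + dot (cost f - cost e) p := by
  obtain ⟨heT, hfG, hfT, -⟩ := h
  have hedges : (T.edgeSwap e f).edgeFinset = insert f (T.edgeFinset.erase e) := by
    ext g
    simp only [mem_edgeFinset, edgeSet_edgeSwap (G.not_isDiag_of_mem_edgeSet hfG),
      Finset.mem_insert, Finset.mem_erase, Set.mem_sdiff, Set.mem_insert_iff,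
      Set.mem_singleton_iff]
    constructor
    · rintro ⟨rfl | hg, hge⟩
      exacts [Or.inl rfl, Or.inr ⟨hge, hg⟩]
    · rintro (rfl | ⟨hge, hg⟩)
      exacts [⟨Or.inl rfl, fun hfe => hfT (hfe ▸ heT)⟩, ⟨Or.inr hg, hge⟩]
  rw [paramWeight, paramWeight, hedges,
    Finset.sum_insert fun hf => hfT (mem_edgeFinset.1 (Finset.mem_of_mem_erase hf)),
    Finset.sum_erase_eq_sub (mem_edgeFinset.2 heT), dot_sub_left]
  ring

lemma IsSpanningTree.exists_isSwap_isSwap [Finite V] (hT : IsSpanningTree G T)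
    (hT' : IsSpanningTree G T') (heT : e ∈ T.edgeSet) (heT' : e ∉ T'.edgeSet) :
    ∃ f, IsSwap G T e f ∧ IsSwap G T' f e := by
  classical
  induction e using Sym2.inductionOn with | hf x y => ?_
  have hy : ¬ (T.deleteEdges {s(x, y)}).Reachable x y :=
    isBridge_iff.1 (isAcyclic_iff_forall_adj_isBridge.1 hT.2.isAcyclic heT)
  -- the `T'`-path from `x` to `y` leaves the side of `x` in `T - xy` through some edge `uv`
  let p := (hT'.2.connected.preconnected x y).some.toPath
  obtain ⟨⟨⟨u, v⟩, huv⟩, hd, hu, hv⟩ :=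
    p.1.exists_boundary_dart {a | (T.deleteEdges {s(x, y)}).Reachable x a} .rfl hy
  have hsep : ¬ (T.deleteEdges {s(x, y)}).Reachable u v := fun h => hv (hu.trans h)
  have hne : s(u, v) ≠ s(x, y) := fun hfe => heT' (hfe ▸ huv)
  have hfT : s(u, v) ∉ T.edgeSet := fun h => hsep ((deleteEdges_adj ..).2 ⟨h, hne⟩).reachable
  have hfp : s(u, v) ∈ p.1.edges := List.mem_map_of_mem hd
  exact ⟨s(u, v),
    ⟨heT, hT'.1 huv, hfT, edgeSwap_le hT.1 (hT'.1 huv), hT.2.edgeSwap heT hfT hsep⟩,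
    ⟨huv, hT.1 heT, heT', edgeSwap_le hT'.1 (hT.1 heT),
      hT'.2.edgeSwap huv heT' (hT'.2.isAcyclic.not_reachable_deleteEdges_of_mem_edges p.2 hfp)⟩⟩

lemma IsSpanningTree.paramWeight_lt_of_forall_isSwap [Fintype V] {d : ℕ}
    {cost : Sym2 V → Fin d → ℝ} {p : Fin d → ℝ} (hT : IsSpanningTree G T)
    (hswap : ∀ e f, IsSwap G T e f → 0 < dot (cost f - cost e) p)
    (hT' : IsSpanningTree G T') (hne : T' ≠ T) :
    paramWeight T cost p < paramWeight T' cost p := by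
  induction hn : (T'.edgeSet \ T.edgeSet).ncard using Nat.strong_induction_on
    generalizing T' with
  | _ n ih =>
  obtain ⟨e, heT, heT'⟩ := hT.2.exists_mem_edgeSet_notMem hT'.2 hne.symm
  obtain ⟨f, hTef, hT'fe⟩ := hT.exists_isSwap_isSwap hT' heT heT'
  have hlt : paramWeight (T'.edgeSwap f e) cost p < paramWeight T' cost p := by
    rw [hT'fe.paramWeight_edgeSwap]
    linarith [hswap e f hTef, dot_sub_left (cost f) (cost e) p, dot_sub_left (cost e) (cost f) p]
  by_cases hT₂ : T'.edgeSwap f e = T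
  · rwa [hT₂] at hlt
  have hcloser : (T'.edgeSwap f e).edgeSet \ T.edgeSet ⊂ T'.edgeSet \ T.edgeSet := by
    rw [edgeSet_edgeSwap (G.not_isDiag_of_mem_edgeSet (edgeSet_mono hT.1 heT))]
    refine (Set.ssubset_iff_of_subset ?_).2 ⟨f, ⟨hT'fe.1, hTef.2.2.1⟩, fun hf => hf.1.2 rfl⟩
    rintro g ⟨⟨rfl | hg, -⟩, hgT⟩
    exacts [absurd heT hgT, ⟨hg, hgT⟩]
  exact (ih _ (hn ▸ Set.ncard_lt_ncard hcloser) hT'fe.2.2.2 hT₂ rfl).trans hlt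

end Swap

theorem mst_parameter_region_general {V : Type*} [Fintype V] {d : ℕ}
    (G T : SimpleGraph V) (cost : Sym2 V → Fin d → ℝ)
    (hT : IsSpanningTree G T) :
    ({p : Fin d → ℝ |
        ∀ T' : SimpleGraph V, IsSpanningTree G T' → T' ≠ T →
          paramWeight T cost p < paramWeight T' cost p} =
      {p : Fin d → ℝ |
        ∀ e f : Sym2 V, IsSwap G T e f → 0 < dot (cost f - cost e) p}) ∧
    Convex ℝ {p : Fin d → ℝ |
        ∀ T' : SimpleGraph V, IsSpanningTree G T' → T' ≠ T →
          paramWeight T cost p < paramWeight T' cost p} := by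
  have hregion : {p : Fin d → ℝ | ∀ T' : SimpleGraph V, IsSpanningTree G T' → T' ≠ T →
        paramWeight T cost p < paramWeight T' cost p} =
      {p : Fin d → ℝ | ∀ e f : Sym2 V, IsSwap G T e f → 0 < dot (cost f - cost e) p} := by
    ext p
    refine ⟨fun hmin e f hswap => ?_, fun hswap T' => hT.paramWeight_lt_of_forall_isSwap hswap⟩
    have hlt : paramWeight T cost p < paramWeight (T.edgeSwap e f) cost p :=
      hmin _ hswap.2.2.2 hswap.edgeSwap_ne
    rw [hswap.paramWeight_edgeSwap] at hlt
    linarith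
  exact ⟨hregion, hregion ▸ convex_setOf_forall_pos_dot (IsSwap G T) fun e f => cost f - cost e⟩

/-- The set of parameter vectors `p ∈ ℝ^d` for which `T` is the unique minimum
spanning tree under `w(e) = cost(e)·p` is exactly the solution set of the
strict inequalities `(cost f − cost e)·p > 0` over all swaps `(e,f)`, and
this set is convex. -/
theorem mst_parameter_region {V : Type*} [Fintype V] [DecidableEq V] {d : ℕ}
    (G T : SimpleGraph V) (cost : Sym2 V → Fin d → ℝ)
    (hG : G.Connected) (hT : IsSpanningTree G T) :
    ({p : Fin d → ℝ |
        ∀ T' : SimpleGraph V, IsSpanningTree G T' → T' ≠ T →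
          paramWeight T cost p < paramWeight T' cost p} =
      {p : Fin d → ℝ |
        ∀ e f : Sym2 V, IsSwap G T e f → 0 < dot (cost f - cost e) p}) ∧
    Convex ℝ {p : Fin d → ℝ |
        ∀ T' : SimpleGraph V, IsSpanningTree G T' → T' ≠ T →
          paramWeight T cost p < paramWeight T' cost p} :=
  mst_parameter_region_general G T cost hT
end

section
/- If one randomly samples k constraints from a d-dimensional linear program with n constraints and computes the optimum of the subprogram consisting only of the sampled constraints, then the expected number of the remaining n−k constraints violated by this optimum is at most d(n−k)/(k+1). -/
open scoped Classical

/-!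
Backwards analysis: a constraint `i` violated by the optimum of a `k`-sample `S` lies in the
base of the `(k+1)`-set `S ∪ {i}`, and `(S, i) ↦ (S ∪ {i}, i)` is injective. So the violations,
summed over all `k`-samples, are at most the base sizes summed over all `(k+1)`-sets, i.e. at most
`d · C(n, k+1) = d (n-k)/(k+1) · C(n, k)`.
-/

namespace Finset

variable {ι M : Type*} [DecidableEq ι] [AddCommMonoid M]

theorem sum_powersetCard_sum_sdiff_insert (C : Finset ι) (k : ℕ) (f : Finset ι → ι → M) :
    ∑ S ∈ C.powersetCard k, ∑ i ∈ C \ S, f (insert i S) i =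
      ∑ T ∈ C.powersetCard (k + 1), ∑ i ∈ T, f T i := by
  rw [sum_sigma', sum_sigma']
  refine sum_bij' (fun p _ => ⟨insert p.2 p.1, p.2⟩) (fun p _ => ⟨p.1.erase p.2, p.2⟩)
    ?_ ?_ ?_ ?_ (fun _ _ => rfl)
  · rintro ⟨S, i⟩ h
    simp only [mem_sigma, mem_powersetCard, mem_sdiff] at h ⊢
    obtain ⟨⟨hSC, rfl⟩, hiC, hiS⟩ := h
    exact ⟨⟨insert_subset hiC hSC, card_insert_of_notMem hiS⟩, mem_insert_self i S⟩
  · rintro ⟨T, i⟩ h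
    simp only [mem_sigma, mem_powersetCard, mem_sdiff] at h ⊢
    obtain ⟨⟨hTC, hT⟩, hiT⟩ := h
    exact ⟨⟨(erase_subset i T).trans hTC, by simp [card_erase_of_mem hiT, hT]⟩,
      hTC hiT, notMem_erase i T⟩
  · rintro ⟨S, i⟩ h
    simp only [mem_sigma, mem_sdiff] at h
    simp [erase_insert h.2.2]
  · rintro ⟨T, i⟩ h
    simp only [mem_sigma] at h
    simp [insert_erase h.2]

theorem sum_card_filter_sdiff_le_sum_card (C : Finset ι) (k : ℕ) (P : Finset ι → ι → Prop)
    (B : Finset ι → Finset ι)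
    (hP : ∀ S ⊆ C, ∀ i ∈ C, i ∉ S → P S i → i ∈ B (insert i S)) :
    ∑ S ∈ C.powersetCard k, ((C \ S).filter fun i => P S i).card ≤
      ∑ T ∈ C.powersetCard (k + 1), (B T).card := by
  calc ∑ S ∈ C.powersetCard k, ((C \ S).filter fun i => P S i).card
      ≤ ∑ S ∈ C.powersetCard k, ∑ i ∈ C \ S, if i ∈ B (insert i S) then 1 else 0 := by
        refine sum_le_sum fun S hS => ?_
        rw [card_filter]
        refine sum_le_sum fun i hi => ?_
        rw [mem_sdiff] at hi
        by_cases hPi : P S i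
        · simp [hPi, hP S (mem_powersetCard.1 hS).1 i hi.1 hi.2 hPi]
        · simp [hPi]
    _ = ∑ T ∈ C.powersetCard (k + 1), (T.filter (· ∈ B T)).card := by
        rw [sum_powersetCard_sum_sdiff_insert C k fun T i => if i ∈ B T then 1 else 0]
        simp only [card_filter]
    _ ≤ ∑ T ∈ C.powersetCard (k + 1), (B T).card :=
        sum_le_sum fun T _ => card_le_card fun _ hi => (mem_filter.1 hi).2

end Finset

theorem clarkson_sampling_general {ι : Type*} [DecidableEq ι] (d n k : ℕ)
    (C : Finset ι) (hn : C.card = n)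
    (opt : Finset ι → (Fin d → ℝ))
    (Violates : (Fin d → ℝ) → ι → Prop)
    (base : Finset ι → Finset ι)
    (hbase_card : ∀ S ⊆ C, (base S).card ≤ d)
    (hbase_viol : ∀ S ⊆ C, ∀ i ∈ C, i ∉ S →
      Violates (opt S) i → i ∈ base (insert i S)) :
    (k + 1) *
        ∑ S ∈ C.powersetCard k, ((C \ S).filter fun i => Violates (opt S) i).card ≤
      d * (n - k) * (C.powersetCard k).card := by
  have hbases : ∑ T ∈ C.powersetCard (k + 1), (base T).card ≤ d * n.choose (k + 1) := by
    rw [← hn, ← Finset.card_powersetCard, mul_comm, ← smul_eq_mul]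
    exact Finset.sum_le_card_nsmul _ _ _ fun T hT => hbase_card T (Finset.mem_powersetCard.1 hT).1
  calc (k + 1) * ∑ S ∈ C.powersetCard k, ((C \ S).filter fun i => Violates (opt S) i).card
      ≤ (k + 1) * (d * n.choose (k + 1)) := by
        gcongr
        exact (Finset.sum_card_filter_sdiff_le_sum_card C k _ base hbase_viol).trans hbases
    _ = d * (n - k) * (C.powersetCard k).card := by
        rw [Finset.card_powersetCard, hn, mul_left_comm, mul_comm (k + 1),
          Nat.choose_succ_right_eq]
        ring

/-- **Clarkson's sampling lemma.**  Consider a `d`-dimensional linear program whose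
constraints are indexed by a finite set `C` of cardinality `n`, with a generic
objective so that for each subset `S` of constraints the optimum `opt S` is unique
and is determined by a base `base S ⊆ S` of at most `d` constraints; in particular a
constraint `i ∉ S` is violated by `opt S` only if `i` belongs to the base of
`S ∪ {i}`.  If one samples `k` constraints uniformly at random and computes the
optimum of the sampled subprogram, then the expected number of the remaining
`n − k` constraints violated by this optimum is at most `d(n−k)/(k+1)`; stated
without division: `(k+1) · ∑_S #violated ≤ d(n−k) · #samples`. -/
theorem clarkson_sampling {ι : Type*} [DecidableEq ι] (d n k : ℕ)
    (C : Finset ι) (hn : C.card = n) (hk : k ≤ n)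
    (opt : Finset ι → (Fin d → ℝ))
    (Violates : (Fin d → ℝ) → ι → Prop)
    (base : Finset ι → Finset ι)
    (hbase_sub : ∀ S ⊆ C, base S ⊆ S)
    (hbase_card : ∀ S ⊆ C, (base S).card ≤ d)
    (hbase_opt : ∀ S ⊆ C, opt (base S) = opt S)
    (hbase_viol : ∀ S ⊆ C, ∀ i ∈ C, i ∉ S →
      Violates (opt S) i → i ∈ base (insert i S)) :
    (k + 1) *
        ∑ S ∈ C.powersetCard k, ((C \ S).filter fun i => Violates (opt S) i).card ≤
      d * (n - k) * (C.powersetCard k).card :=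
  clarkson_sampling_general d n k C hn opt Violates base hbase_card hbase_viol
end

section
/- Any restricted partition of order z of a rooted binary tree on n vertices has O(n/z) sets; in particular, for z = 2 there exists a restricted partition with at most 5n/6 sets. -/
open SimpleGraph
open scoped Classical

/-- `T` is a binary tree rooted at `r`: it is a tree in which every vertex has at
most two children (where `v` is a child of `u` if they are adjacent and `v` is one
step further from the root). -/
def IsBinaryRootedTree {V : Type*} [Fintype V] (T : SimpleGraph V) (r : V) : Prop :=
  T.IsTree ∧ ∀ u : V,
    (Finset.univ.filter fun v => T.Adj u v ∧ T.dist r v = T.dist r u + 1).card ≤ 2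

/-- A candidate set of a restricted partition of order `z`: it has at most `z`
vertices, induces a connected subtree of `T`, and if it has more than one vertex
then at most two tree edges have exactly one endpoint in it. -/
def GoodSet {V : Type*} [Fintype V] [DecidableEq V] (T : SimpleGraph V) (z : ℕ)
    (S : Finset V) : Prop :=
  S.card ≤ z ∧ (T.induce (S : Set V)).Connected ∧
    (1 < S.card →
      (T.edgeFinset.filter fun e => ∃ u v : V, e = s(u, v) ∧ u ∈ S ∧ v ∉ S).card ≤ 2)

/-- A restricted partition of order `z` of the vertices of `T`: a partition into
good sets that is maximal, i.e. no two of its sets can be merged into a single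
good set. -/
def IsRestrictedPartition {V : Type*} [Fintype V] [DecidableEq V]
    (T : SimpleGraph V) (z : ℕ) (P : Finset (Finset V)) : Prop :=
  (∀ v : V, ∃! S : Finset V, S ∈ P ∧ v ∈ S) ∧
  (∀ S ∈ P, S.Nonempty) ∧
  (∀ S ∈ P, GoodSet T z S) ∧
  (∀ S₁ ∈ P, ∀ S₂ ∈ P, S₁ ≠ S₂ → ¬ GoodSet T z (S₁ ∪ S₂))

/-!
Part one is a charging argument. Call a part small if it has at most `z / 2` vertices. Two
adjacent small parts with at most four boundary edges between them could be merged, so every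
boundary edge of a small part with one boundary edge leads to a large part, and every boundary
edge of a small part with two boundary edges leads to a large part or to a part with three.
Contracting the parts of a tree turns it into a tree, in which parts with three boundary edges
are outnumbered by parts with one. Together this bounds the number of parts by `31 / 2` times
the number of large parts, of which there are at most `2n / z`.

For `z = 2`, a maximum matching by edges `uv` with `deg u + deg v ≤ 4`, completed by
singletons, is a restricted partition whose number of parts is `n` minus the size of the
matching. A matching `M` with `n ≤ 6|M| + 5` is built inside sets `U` closed under taking
parents, with the invariant `|U| ≤ 6|M| + 5 + 3 · (edges leaving U)`: cut off the parent `p`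
of a deepest vertex together with its children. Either some child `c` gives a light edge `cp`,
or the removed vertices carry at least two edges leaving `U`; in both cases the invariant
survives, although the grandparent of the deepest vertex gains one edge leaving the new set.
-/

open Finset

lemma Finset.sum_card_le_sum_card_of_pairwiseDisjoint {ι α : Type*} [DecidableEq α]
    {f : ι → Finset α} {X Y : Finset ι} (hX : (X : Set ι).PairwiseDisjoint f)
    (hXY : ∀ i ∈ X, f i ⊆ Y.biUnion f) : ∑ i ∈ X, #(f i) ≤ ∑ j ∈ Y, #(f j) := by
  rw [← card_biUnion hX]
  exact (card_le_card (biUnion_subset.2 hXY)).trans card_biUnion_le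

lemma Finpartition.sum_sum_parts {α M : Type*} [DecidableEq α] [AddCommMonoid M] {s : Finset α}
    (F : Finpartition s) (f : α → M) : ∑ S ∈ F.parts, ∑ a ∈ S, f a = ∑ a ∈ s, f a := by
  conv_rhs => rw [← F.biUnion_parts, sum_biUnion F.supIndep.pairwiseDisjoint]
  rfl

lemma Finpartition.card_filter_lt_two_mul_card_mul_le {V : Type*} [Fintype V] [DecidableEq V]
    (F : Finpartition (univ : Finset V)) (z : ℕ) :
    #(F.parts.filter fun S => z < 2 * #S) * z ≤ 2 * Fintype.card V := by
  calc #(F.parts.filter fun S => z < 2 * #S) * z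
      ≤ ∑ S ∈ F.parts.filter (fun S => z < 2 * #S), 2 * #S := by
        rw [← smul_eq_mul]
        exact card_nsmul_le_sum _ _ _ fun S hS => by simp only [mem_filter] at hS; omega
    _ ≤ ∑ S ∈ F.parts, 2 * #S := sum_le_sum_of_subset (filter_subset _ _)
    _ = 2 * Fintype.card V := by rw [← mul_sum, F.sum_card_parts, card_univ]

namespace SimpleGraph

section RootedTree

variable {V : Type*} {T : SimpleGraph V}

lemma IsTree.eq_of_adj_of_dist_add_one (hT : T.IsTree) (r : V) {u p₁ p₂ : V}
    (h₁ : T.Adj u p₁) (h₂ : T.Adj u p₂)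
    (d₁ : T.dist r p₁ + 1 = T.dist r u) (d₂ : T.dist r p₂ + 1 = T.dist r u) : p₁ = p₂ := by
  obtain ⟨q₁, hq₁⟩ := (hT.connected r p₁).exists_walk_length_eq_dist
  obtain ⟨q₂, hq₂⟩ := (hT.connected r p₂).exists_walk_length_eq_dist
  have path₁ := (q₁.concat h₁.symm).isPath_of_length_eq_dist (by simp [hq₁, d₁])
  have path₂ := (q₂.concat h₂.symm).isPath_of_length_eq_dist (by simp [hq₂, d₂])
  exact (Walk.concat_inj ((hT.existsUnique_path r u).unique path₁ path₂)).1

lemma Connected.exists_adj_dist_add_one (hc : T.Connected) {r u : V} (hu : u ≠ r) :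
    ∃ p, T.Adj u p ∧ T.dist r p + 1 = T.dist r u := by
  obtain ⟨w, hw⟩ := (hc u r).exists_walk_length_eq_dist
  have hnil : ¬w.Nil := Walk.not_nil_of_ne hu
  refine ⟨w.snd, w.adj_snd hnil, le_antisymm ?_ ?_⟩
  · have := T.dist_le w.tail.reverse
    have := w.length_tail_add_one hnil
    rw [Walk.length_reverse] at *
    rw [dist_comm] at hw
    omega
  · have := hc.dist_triangle (u := r) (v := w.snd) (w := u)
    rwa [dist_comm (u := w.snd), dist_eq_one_iff_adj.mpr (w.adj_snd hnil)] at this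

end RootedTree

section BoundaryEdges

variable {V : Type*} [Fintype V] [DecidableEq V] (T : SimpleGraph V)

-- The edge set counted in the third clause of `GoodSet`.
noncomputable def boundaryEdges (S : Finset V) : Finset (Sym2 V) :=
  T.edgeFinset.filter fun e => ∃ u v : V, e = s(u, v) ∧ u ∈ S ∧ v ∉ S

noncomputable def innerEdges (S : Finset V) : Finset (Sym2 V) :=
  T.edgeFinset.filter fun e => ∃ u v : V, e = s(u, v) ∧ u ∈ S ∧ v ∈ S

variable {T} {S : Finset V}

@[simp]
lemma mem_boundaryEdges {a b : V} :
    s(a, b) ∈ T.boundaryEdges S ↔ T.Adj a b ∧ (a ∈ S ↔ b ∉ S) := by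
  simp only [boundaryEdges, mem_filter, mem_edgeFinset, mem_edgeSet, Sym2.eq_iff]
  constructor
  · rintro ⟨hab, u, v, ⟨rfl, rfl⟩ | ⟨rfl, rfl⟩, hu, hv⟩ <;> tauto
  · rintro ⟨hab, h⟩
    by_cases ha : a ∈ S
    · exact ⟨hab, a, b, Or.inl ⟨rfl, rfl⟩, ha, h.1 ha⟩
    · exact ⟨hab, b, a, Or.inr ⟨rfl, rfl⟩, by tauto, ha⟩

@[simp]
lemma mem_innerEdges {a b : V} :
    s(a, b) ∈ T.innerEdges S ↔ T.Adj a b ∧ a ∈ S ∧ b ∈ S := by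
  simp only [innerEdges, mem_filter, mem_edgeFinset, mem_edgeSet, Sym2.eq_iff]
  constructor
  · rintro ⟨hab, u, v, ⟨rfl, rfl⟩ | ⟨rfl, rfl⟩, hu, hv⟩ <;> tauto
  · rintro ⟨hab, ha, hb⟩
    exact ⟨hab, a, b, Or.inl ⟨rfl, rfl⟩, ha, hb⟩

lemma boundaryEdges_subset_edgeFinset : T.boundaryEdges S ⊆ T.edgeFinset := filter_subset _ _

lemma innerEdges_subset_edgeFinset : T.innerEdges S ⊆ T.edgeFinset := filter_subset _ _

lemma sum_degree_eq_card_boundaryEdges_add (S : Finset V) :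
    ∑ v ∈ S, T.degree v = #(T.boundaryEdges S) + 2 * #(T.innerEdges S) := by
  have hedge : ∀ e ∈ T.edgeFinset, ∑ v ∈ S, (if v ∈ e then 1 else 0) =
      (if e ∈ T.boundaryEdges S then 1 else 0) + 2 * (if e ∈ T.innerEdges S then 1 else 0) := by
    intro e he
    induction e using Sym2.ind with
    | _ a b =>
    have hab : T.Adj a b := by simpa using he
    have hsplit : ∀ v, (if v ∈ s(a, b) then 1 else 0) =
        (if v = a then 1 else 0) + (if v = b then 1 else 0) := by
      intro v
      rcases eq_or_ne v a with rfl | hva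
      · simp [hab.ne]
      · simp [hva]
    rw [sum_congr rfl fun v _ => hsplit v, sum_add_distrib, sum_ite_eq', sum_ite_eq']
    by_cases ha : a ∈ S <;> by_cases hb : b ∈ S <;> simp [ha, hb, hab]
  calc ∑ v ∈ S, T.degree v
      = ∑ v ∈ S, ∑ e ∈ T.edgeFinset, if v ∈ e then 1 else 0 := by
        refine sum_congr rfl fun v _ => ?_
        rw [← card_incidenceFinset_eq_degree, incidenceFinset_eq_filter, card_filter]
    _ = ∑ e ∈ T.edgeFinset, ∑ v ∈ S, if v ∈ e then 1 else 0 := sum_comm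
    _ = ∑ e ∈ T.edgeFinset, ((if e ∈ T.boundaryEdges S then 1 else 0) +
          2 * (if e ∈ T.innerEdges S then 1 else 0)) := sum_congr rfl hedge
    _ = #(T.boundaryEdges S) + 2 * #(T.innerEdges S) := by
        rw [sum_add_distrib, ← mul_sum, ← card_filter, ← card_filter,
          filter_mem_eq_inter, filter_mem_eq_inter,
          inter_eq_right.mpr boundaryEdges_subset_edgeFinset,
          inter_eq_right.mpr innerEdges_subset_edgeFinset]

lemma card_boundaryEdges_le_sum_degree (S : Finset V) :
    #(T.boundaryEdges S) ≤ ∑ v ∈ S, T.degree v := by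
  rw [sum_degree_eq_card_boundaryEdges_add]
  exact Nat.le_add_right _ _

lemma innerEdges_pair {u v : V} (huv : T.Adj u v) : T.innerEdges {u, v} = {s(u, v)} := by
  ext e
  induction e using Sym2.ind with
  | _ a b =>
  simp only [mem_innerEdges, mem_insert, mem_singleton, Sym2.eq_iff]
  constructor
  · rintro ⟨hab, rfl | rfl, rfl | rfl⟩ <;> simp_all
  · rintro (⟨rfl, rfl⟩ | ⟨rfl, rfl⟩)
    · exact ⟨huv, by simp, by simp⟩
    · exact ⟨huv.symm, by simp, by simp⟩

lemma card_boundaryEdges_pair_add_two {u v : V} (huv : T.Adj u v) :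
    #(T.boundaryEdges {u, v}) + 2 = T.degree u + T.degree v := by
  have := sum_degree_eq_card_boundaryEdges_add (T := T) {u, v}
  rw [sum_pair huv.ne, innerEdges_pair huv, card_singleton] at this
  omega

lemma card_le_card_innerEdges_add_one (hS : (T.induce (S : Set V)).Connected) :
    #S ≤ #(T.innerEdges S) + 1 := by
  have hvert := hS.card_vert_le_card_edgeSet_add_one
  have hedge : #(T.induce (S : Set V)).edgeFinset ≤ #(T.innerEdges S) := by
    refine card_le_card_of_injOn (Sym2.map Subtype.val) (fun e he => ?_)
      (Sym2.map.injective Subtype.val_injective).injOn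
    induction e using Sym2.ind with
    | _ a b => simpa [a.2, b.2] using he
  rw [Nat.card_coe_set_eq, Set.ncard_coe_finset, Nat.card_eq_fintype_card,
    ← edgeFinset_card] at hvert
  omega

lemma boundaryEdges_nonempty (hT : T.Connected) {a b : V} (ha : a ∈ S) (hb : b ∉ S) :
    (T.boundaryEdges S).Nonempty := by
  obtain ⟨d, -, hd, hd'⟩ := (hT.preconnected a b).some.exists_boundary_dart (S : Set V) ha hb
  exact ⟨d.edge, by simpa [Dart.edge, d.adj] using ⟨fun _ => hd', fun _ => hd⟩⟩

lemma card_boundaryEdges_union_add_two_le {S₁ S₂ : Finset V} (hdisj : Disjoint S₁ S₂) {a b : V}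
    (hab : T.Adj a b) (ha : a ∈ S₁) (hb : b ∈ S₂) :
    #(T.boundaryEdges (S₁ ∪ S₂)) + 2 ≤ #(T.boundaryEdges S₁) + #(T.boundaryEdges S₂) := by
  have ha₂ : a ∉ S₂ := Finset.disjoint_left.1 hdisj ha
  have hb₁ : b ∉ S₁ := Finset.disjoint_right.1 hdisj hb
  have hmem : s(a, b) ∈ T.boundaryEdges S₁ ∩ T.boundaryEdges S₂ := by simp [hab, ha, hb, ha₂, hb₁]
  have hsub : insert s(a, b) (T.boundaryEdges (S₁ ∪ S₂)) ⊆
      T.boundaryEdges S₁ ∪ T.boundaryEdges S₂ := by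
    refine insert_subset (mem_union_left _ (mem_inter.1 hmem).1) fun e he => ?_
    induction e using Sym2.ind with
    | _ x y => simp only [mem_boundaryEdges, mem_union] at he ⊢; tauto
  have hcard := card_le_card hsub
  rw [card_insert_of_notMem (by simp [ha, hb])] at hcard
  have := card_union_add_card_inter (T.boundaryEdges S₁) (T.boundaryEdges S₂)
  have := card_pos.2 ⟨_, hmem⟩
  omega

variable {F : Finpartition (univ : Finset V)}

lemma IsTree.sum_card_boundaryEdges_add_two_le (hT : T.IsTree)
    (hF : ∀ S ∈ F.parts, (T.induce (S : Set V)).Connected) :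
    ∑ S ∈ F.parts, #(T.boundaryEdges S) + 2 ≤ 2 * #F.parts := by
  have hdeg : ∑ S ∈ F.parts, (#(T.boundaryEdges S) + 2 * #(T.innerEdges S)) =
      2 * #T.edgeFinset := by
    simp_rw [← sum_degree_eq_card_boundaryEdges_add]
    rw [F.sum_sum_parts, sum_degrees_eq_twice_card_edges]
  have hinner : ∑ S ∈ F.parts, #S ≤ ∑ S ∈ F.parts, (#(T.innerEdges S) + 1) :=
    sum_le_sum fun S hS => card_le_card_innerEdges_add_one (hF S hS)
  rw [F.sum_card_parts, card_univ, sum_add_distrib, sum_const, smul_eq_mul, mul_one] at hinner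
  rw [sum_add_distrib, ← mul_sum] at hdeg
  have := hT.card_edgeFinset
  omega

lemma IsTree.card_filter_three_le_add_two_le (hT : T.IsTree)
    (hF : ∀ S ∈ F.parts, (T.induce (S : Set V)).Connected)
    (hpos : ∀ S ∈ F.parts, 1 ≤ #(T.boundaryEdges S)) :
    #(F.parts.filter fun S => 3 ≤ #(T.boundaryEdges S)) + 2 ≤
      #(F.parts.filter fun S => #(T.boundaryEdges S) = 1) := by
  have key : ∑ S ∈ F.parts, (2 + if 3 ≤ #(T.boundaryEdges S) then 1 else 0) ≤
      ∑ S ∈ F.parts, (#(T.boundaryEdges S) + if #(T.boundaryEdges S) = 1 then 1 else 0) :=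
    sum_le_sum fun S hS => by have := hpos S hS; split_ifs <;> omega
  rw [sum_add_distrib, sum_add_distrib, sum_const, smul_eq_mul, ← card_filter,
    ← card_filter] at key
  have := hT.sum_card_boundaryEdges_add_two_le hF
  omega

end BoundaryEdges

end SimpleGraph

lemma IsBinaryRootedTree.degree_le_three {V : Type*} [Fintype V] {T : SimpleGraph V} {r : V}
    (h : IsBinaryRootedTree T r) (u : V) : T.degree u ≤ 3 := by
  set children := univ.filter fun v => T.Adj u v ∧ T.dist r v = T.dist r u + 1
  set parents := univ.filter fun v => T.Adj u v ∧ T.dist r v + 1 = T.dist r u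
  have hparents : #parents ≤ 1 := card_le_one.2 fun a ha b hb => by
    simp only [parents, mem_filter] at ha hb
    exact h.1.eq_of_adj_of_dist_add_one r ha.2.1 hb.2.1 ha.2.2 hb.2.2
  have hsub : T.neighborFinset u ⊆ children ∪ parents := fun v hv => by
    rw [mem_neighborFinset] at hv
    simp only [children, parents, mem_union, mem_filter, mem_univ, true_and]
    rcases h.1.dist_eq_dist_add_one_of_adj r hv with h' | h'
    · exact Or.inr ⟨hv, h'.symm⟩
    · exact Or.inl ⟨hv, h'⟩
  calc T.degree u = #(T.neighborFinset u) := (card_neighborFinset_eq_degree _ _).symm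
    _ ≤ #children + #parents := (card_le_card hsub).trans (card_union_le _ _)
    _ ≤ 3 := by have : #children ≤ 2 := h.2 u; omega

section GoodSet

variable {V : Type*} [Fintype V] [DecidableEq V] {T : SimpleGraph V} {z : ℕ}

lemma goodSet_singleton (hz : 1 ≤ z) (x : V) : GoodSet T z {x} := by
  refine ⟨by simpa using hz, ?_, by simp⟩
  rw [coe_singleton, induce_singleton_eq_top]
  exact connected_top

lemma goodSet_pair (hz : 2 ≤ z) {u v : V} (huv : T.Adj u v)
    (hdeg : T.degree u + T.degree v ≤ 4) : GoodSet T z {u, v} := by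
  refine ⟨(card_le_two).trans hz, ?_, fun _ => ?_⟩
  · rw [coe_pair]
    exact induce_pair_connected_of_adj huv
  · show #(T.boundaryEdges {u, v}) ≤ 2
    have := card_boundaryEdges_pair_add_two huv
    omega

lemma goodSet_union_of_adj {S₁ S₂ : Finset V} (h₁ : (T.induce (S₁ : Set V)).Connected)
    (h₂ : (T.induce (S₂ : Set V)).Connected) (hdisj : Disjoint S₁ S₂) {a b : V}
    (hab : T.Adj a b) (ha : a ∈ S₁) (hb : b ∈ S₂) (hcard : #S₁ + #S₂ ≤ z)
    (hbd : #(T.boundaryEdges S₁) + #(T.boundaryEdges S₂) ≤ 4) : GoodSet T z (S₁ ∪ S₂) := by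
  refine ⟨(card_union_le _ _).trans hcard, ?_, fun _ => ?_⟩
  · rw [coe_union]
    exact connected_induce_union h₁.preconnected h₂.preconnected ha hb hab
  · show #(T.boundaryEdges (S₁ ∪ S₂)) ≤ 2
    have := card_boundaryEdges_union_add_two_le hdisj hab ha hb
    omega

end GoodSet

namespace IsRestrictedPartition

variable {V : Type*} [Fintype V] [DecidableEq V] {T : SimpleGraph V} {z : ℕ}
  {P : Finset (Finset V)} {S S₁ S₂ : Finset V}

noncomputable def finpartition (hP : IsRestrictedPartition T z P) :
    Finpartition (univ : Finset V) :=
  Finpartition.ofExistsUnique P (fun _ _ => subset_univ _) (fun v _ => hP.1 v)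
    fun h => not_nonempty_empty (hP.2.1 ∅ h)

lemma eq_of_mem (hP : IsRestrictedPartition T z P) (h₁ : S₁ ∈ P) (h₂ : S₂ ∈ P) {v : V}
    (hv₁ : v ∈ S₁) (hv₂ : v ∈ S₂) : S₁ = S₂ :=
  (hP.1 v).unique ⟨h₁, hv₁⟩ ⟨h₂, hv₂⟩

lemma disjoint (hP : IsRestrictedPartition T z P) (h₁ : S₁ ∈ P) (h₂ : S₂ ∈ P) (hne : S₁ ≠ S₂) :
    Disjoint S₁ S₂ :=
  Finset.disjoint_left.2 fun _ hv₁ hv₂ => hne (hP.eq_of_mem h₁ h₂ hv₁ hv₂)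

lemma one_le_card_boundaryEdges (hP : IsRestrictedPartition T z P) (hT : T.Connected)
    (hP2 : 1 < #P) (hS : S ∈ P) : 1 ≤ #(T.boundaryEdges S) := by
  obtain ⟨S', hS', hne⟩ := exists_mem_ne hP2 S
  obtain ⟨a, ha⟩ := hP.2.1 S hS
  obtain ⟨b, hb⟩ := hP.2.1 S' hS'
  exact card_pos.2 (boundaryEdges_nonempty hT ha (Finset.disjoint_right.1
    (hP.disjoint hS hS' hne.symm) hb))

lemma card_boundaryEdges_le_three (hP : IsRestrictedPartition T z P)
    (hdeg : ∀ v, T.degree v ≤ 3) (hS : S ∈ P) : #(T.boundaryEdges S) ≤ 3 := by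
  rcases le_or_gt #S 1 with h | h
  · obtain ⟨x, rfl⟩ := card_eq_one.1 (le_antisymm h (card_pos.2 (hP.2.1 S hS)))
    simpa using (card_boundaryEdges_le_sum_degree (T := T) {x}).trans (hdeg x)
  · exact ((hP.2.2.1 S hS).2.2 h).trans (by norm_num)

lemma exists_mem_boundaryEdges (hP : IsRestrictedPartition T z P) (hS : S ∈ P) {e : Sym2 V}
    (he : e ∈ T.boundaryEdges S) : ∃ S' ∈ P, S' ≠ S ∧ e ∈ T.boundaryEdges S' := by
  obtain ⟨he, a, b, rfl, ha, hb⟩ := mem_filter.1 he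
  obtain ⟨S', ⟨hS', hbS'⟩, -⟩ := hP.1 b
  have hne : S' ≠ S := fun h => hb (h ▸ hbS')
  have haS' : a ∉ S' := Finset.disjoint_right.1 (hP.disjoint hS' hS hne) ha
  exact ⟨S', hS', hne, by simp_all⟩

lemma five_le_card_boundaryEdges_add (hP : IsRestrictedPartition T z P) (h₁ : S₁ ∈ P)
    (h₂ : S₂ ∈ P) (hne : S₁ ≠ S₂) {e : Sym2 V} (he₁ : e ∈ T.boundaryEdges S₁)
    (he₂ : e ∈ T.boundaryEdges S₂) (hcard : #S₁ + #S₂ ≤ z) :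
    5 ≤ #(T.boundaryEdges S₁) + #(T.boundaryEdges S₂) := by
  obtain ⟨he, a, b, rfl, ha, -⟩ := mem_filter.1 he₁
  have hdisj := hP.disjoint h₁ h₂ hne
  have hb : b ∈ S₂ := by
    have := Finset.disjoint_left.1 hdisj ha
    simp_all
  by_contra! hbd
  exact hP.2.2.2 S₁ h₁ S₂ h₂ hne (goodSet_union_of_adj (hP.2.2.1 S₁ h₁).2.1
    (hP.2.2.1 S₂ h₂).2.1 hdisj (by simpa using he) ha hb hcard (by omega))

/-- Small parts with `k ≤ 2` boundary edges have pairwise disjoint boundaries, and each of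
their boundary edges leads to a large part or to a part with at least `5 - k` of them. -/
lemma mul_card_filter_le (hP : IsRestrictedPartition T z P) (hdeg : ∀ v, T.degree v ≤ 3)
    {k : ℕ} (hk : k ≤ 2) :
    k * #(P.filter fun S => 2 * #S ≤ z ∧ #(T.boundaryEdges S) = k) ≤
      3 * (#(P.filter fun S => z < 2 * #S) +
        #(P.filter fun S => 5 ≤ k + #(T.boundaryEdges S))) := by
  set X := P.filter fun S => 2 * #S ≤ z ∧ #(T.boundaryEdges S) = k
  set Y := P.filter fun S => z < 2 * #S ∨ 5 ≤ k + #(T.boundaryEdges S)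
  have hdisj : (X : Set (Finset V)).PairwiseDisjoint T.boundaryEdges := by
    intro S₁ h₁ S₂ h₂ hne
    simp only [X, coe_filter, Set.mem_ofPred_eq] at h₁ h₂
    refine Finset.disjoint_left.2 fun e he₁ he₂ => ?_
    have := hP.five_le_card_boundaryEdges_add h₁.1 h₂.1 hne he₁ he₂ (by omega)
    omega
  have hsub : ∀ S ∈ X, T.boundaryEdges S ⊆ Y.biUnion T.boundaryEdges := by
    intro S hS e he
    simp only [X, mem_filter] at hS
    obtain ⟨S', hS', hne, he'⟩ := hP.exists_mem_boundaryEdges hS.1 he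
    refine mem_biUnion.2 ⟨S', mem_filter.2 ⟨hS', ?_⟩, he'⟩
    by_contra! h
    have := hP.five_le_card_boundaryEdges_add hS.1 hS' hne.symm he he' (by omega)
    omega
  calc k * #X = ∑ S ∈ X, #(T.boundaryEdges S) := by
        rw [sum_congr rfl fun S hS => (mem_filter.1 hS).2.2, sum_const, smul_eq_mul, mul_comm]
    _ ≤ ∑ S ∈ Y, #(T.boundaryEdges S) := sum_card_le_sum_card_of_pairwiseDisjoint hdisj hsub
    _ ≤ 3 * #Y := by
        rw [mul_comm, ← smul_eq_mul]
        exact sum_le_card_nsmul _ _ _ fun S hS =>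
          hP.card_boundaryEdges_le_three hdeg (mem_filter.1 hS).1
    _ ≤ _ := Nat.mul_le_mul_left _
        ((congrArg card (filter_or _ _ _)).trans_le (card_union_le _ _))

lemma two_mul_card_le_mul_card_filter (hP : IsRestrictedPartition T z P) (hT : T.IsTree)
    (hdeg : ∀ v, T.degree v ≤ 3) (hP2 : 1 < #P) :
    2 * #P ≤ 31 * #(P.filter fun S => z < 2 * #S) := by
  have hpos S (hS : S ∈ P) := hP.one_le_card_boundaryEdges hT.connected hP2 hS
  have hle3 S (hS : S ∈ P) := hP.card_boundaryEdges_le_three hdeg hS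
  set H := P.filter fun S => z < 2 * #S
  set X₁ := P.filter fun S => 2 * #S ≤ z ∧ #(T.boundaryEdges S) = 1
  set X₂ := P.filter fun S => 2 * #S ≤ z ∧ #(T.boundaryEdges S) = 2
  set B₁ := P.filter fun S => #(T.boundaryEdges S) = 1
  set B₃ := P.filter fun S => 3 ≤ #(T.boundaryEdges S)
  have hX₁ : 1 * #X₁ ≤ 3 * (#H + #(P.filter fun S => 5 ≤ 1 + #(T.boundaryEdges S))) :=
    hP.mul_card_filter_le hdeg (by norm_num)
  rw [filter_false_of_mem fun S hS => by have := hle3 S hS; omega, card_empty] at hX₁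
  have hX₂ : 2 * #X₂ ≤ 3 * (#H + #(P.filter fun S => 5 ≤ 2 + #(T.boundaryEdges S))) :=
    hP.mul_card_filter_le hdeg le_rfl
  rw [show P.filter (fun S => 5 ≤ 2 + #(T.boundaryEdges S)) = B₃ from
    filter_congr fun S _ => by omega] at hX₂
  have hB : #B₃ + 2 ≤ #B₁ :=
    hT.card_filter_three_le_add_two_le (F := hP.finpartition) (fun S hS => (hP.2.2.1 S hS).2.1) hpos
  have hB₁ : #B₁ ≤ #X₁ + #H := by
    refine (card_le_card fun S hS => ?_).trans (card_union_le _ _)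
    simp only [B₁, X₁, H, mem_filter, mem_union] at hS ⊢
    by_cases hl : 2 * #S ≤ z
    · exact Or.inl ⟨hS.1, hl, hS.2⟩
    · exact Or.inr ⟨hS.1, by omega⟩
  have hcover : #P ≤ #H + #X₁ + #X₂ + #B₃ := by
    have hsub : P ⊆ H ∪ X₁ ∪ X₂ ∪ B₃ := fun S hS => by
      simp only [B₃, X₁, X₂, H, mem_filter, mem_union, hS, true_and]
      have := hpos S hS
      by_cases hl : 2 * #S ≤ z <;> omega
    have := card_le_card hsub
    have := card_union_le (H ∪ X₁ ∪ X₂) B₃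
    have := card_union_le (H ∪ X₁) X₂
    have := card_union_le H X₁
    omega
  -- `X₁ ≤ 3H`, `B₃ ≤ X₁ + H - 2 ≤ 4H` and `2X₂ ≤ 3(H + B₃) ≤ 15H`.
  omega

theorem card_mul_le (hP : IsRestrictedPartition T z P) (hT : T.IsTree)
    (hdeg : ∀ v, T.degree v ≤ 3) (hz : z ≤ Fintype.card V) :
    #P * z ≤ 31 * Fintype.card V := by
  rcases le_or_gt #P 1 with hP1 | hP2
  · nlinarith
  have := hP.two_mul_card_le_mul_card_filter hT hdeg hP2
  have : #(P.filter fun S => z < 2 * #S) * z ≤ 2 * Fintype.card V :=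
    hP.finpartition.card_filter_lt_two_mul_card_mul_le z
  nlinarith

lemma card_add_card_le (hP : IsRestrictedPartition T z P) {Q : Finset (Finset V)}
    (hQP : Q ⊆ P) (hQ : ∀ S ∈ Q, 2 ≤ #S) : #P + #Q ≤ Fintype.card V := by
  have hsum : ∑ S ∈ P, (1 + (#S - 1)) = Fintype.card V := by
    rw [← card_univ, ← hP.finpartition.sum_card_parts]
    exact sum_congr rfl fun S hS => by have := card_pos.2 (hP.2.1 S hS); omega
  have hQsum : #Q ≤ ∑ S ∈ Q, (#S - 1) := by
    rw [card_eq_sum_ones]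
    exact sum_le_sum fun S hS => by have := hQ S hS; omega
  rw [sum_add_distrib, sum_const, smul_eq_mul, mul_one] at hsum
  have := sum_le_sum_of_subset (f := fun S => #S - 1) hQP
  omega

end IsRestrictedPartition

section GoodMatching

variable {V : Type*} [Fintype V] [DecidableEq V] {T : SimpleGraph V} {Q : Finset (Finset V)}

def IsGoodMatching (T : SimpleGraph V) (Q : Finset (Finset V)) : Prop :=
  (∀ S ∈ Q, #S = 2 ∧ GoodSet T 2 S) ∧ (Q : Set (Finset V)).PairwiseDisjoint id

lemma isGoodMatching_empty : IsGoodMatching T ∅ := ⟨by simp, by simp⟩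

lemma IsGoodMatching.insert (hQ : IsGoodMatching T Q) {S : Finset V} (hS : #S = 2)
    (hgood : GoodSet T 2 S) (hdisj : ∀ S' ∈ Q, Disjoint S S') :
    IsGoodMatching T (insert S Q) := by
  refine ⟨fun S' hS' => ?_, ?_⟩
  · rcases mem_insert.1 hS' with rfl | hS'
    · exact ⟨hS, hgood⟩
    · exact hQ.1 S' hS'
  · rw [coe_insert]
    exact hQ.2.insert fun S' hS' _ => hdisj S' hS'

def matchingPartition (Q : Finset (Finset V)) : Finset (Finset V) :=
  Q ∪ (univ.filter fun v => ∀ S ∈ Q, v ∉ S).image singleton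

lemma mem_matchingPartition {S : Finset V} :
    S ∈ matchingPartition Q ↔ S ∈ Q ∨ ∃ v, (∀ S' ∈ Q, v ∉ S') ∧ {v} = S := by
  simp [matchingPartition]

lemma IsGoodMatching.existsUnique_mem_matchingPartition (hQ : IsGoodMatching T Q) (v : V) :
    ∃! S, S ∈ matchingPartition Q ∧ v ∈ S := by
  by_cases hv : ∃ S ∈ Q, v ∈ S
  · obtain ⟨S, hS, hvS⟩ := hv
    refine ⟨S, ⟨mem_union_left _ hS, hvS⟩, fun S' ⟨hS', hvS'⟩ => ?_⟩
    rcases mem_matchingPartition.1 hS' with hS' | ⟨w, hw, rfl⟩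
    · exact hQ.2.elim_finset hS' hS v hvS' hvS
    · exact absurd hvS (mem_singleton.1 hvS' ▸ hw S hS)
  · push Not at hv
    refine ⟨{v}, ⟨mem_matchingPartition.2 (Or.inr ⟨v, hv, rfl⟩), mem_singleton_self v⟩,
      fun S' ⟨hS', hvS'⟩ => ?_⟩
    rcases mem_matchingPartition.1 hS' with hS' | ⟨w, hw, rfl⟩
    · exact absurd hvS' (hv S' hS')
    · rw [mem_singleton.1 hvS']

lemma IsGoodMatching.forall_notMem_of_card_eq_one (hQ : IsGoodMatching T Q) {S : Finset V}
    (hS : S ∈ matchingPartition Q) (h1 : #S = 1) : ∀ v ∈ S, ∀ S' ∈ Q, v ∉ S' := by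
  rcases mem_matchingPartition.1 hS with hS | ⟨w, hw, rfl⟩
  · have := (hQ.1 S hS).1
    omega
  · intro v hv
    rwa [mem_singleton.1 hv]

theorem IsGoodMatching.isRestrictedPartition (hQ : IsGoodMatching T Q)
    (hmax : ∀ Q', IsGoodMatching T Q' → #Q' ≤ #Q) :
    IsRestrictedPartition T 2 (matchingPartition Q) := by
  have hcover := hQ.existsUnique_mem_matchingPartition
  have hne : ∀ S ∈ matchingPartition Q, S.Nonempty := by
    intro S hS
    rcases mem_matchingPartition.1 hS with hS | ⟨w, -, rfl⟩
    · exact card_pos.1 (by rw [(hQ.1 S hS).1]; norm_num)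
    · exact singleton_nonempty w
  refine ⟨hcover, hne, fun S hS => ?_, fun S₁ h₁ S₂ h₂ hne₁₂ hgood => ?_⟩
  · rcases mem_matchingPartition.1 hS with hS | ⟨w, -, rfl⟩
    · exact (hQ.1 S hS).2
    · exact goodSet_singleton (by norm_num) w
  have hdisj : Disjoint S₁ S₂ := Finset.disjoint_left.2 fun v hv₁ hv₂ =>
    hne₁₂ ((hcover v).unique ⟨h₁, hv₁⟩ ⟨h₂, hv₂⟩)
  have hcard := card_union_of_disjoint hdisj
  have hS₁ : #S₁ = 1 := by
    have := card_pos.2 (hne S₁ h₁)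
    have := card_pos.2 (hne S₂ h₂)
    have := hgood.1
    omega
  have hS₂ : #S₂ = 1 := by
    have := card_pos.2 (hne S₂ h₂)
    have := hgood.1
    omega
  have hfree : ∀ v ∈ S₁ ∪ S₂, ∀ S' ∈ Q, v ∉ S' := by
    intro v hv
    rcases mem_union.1 hv with hv | hv
    · exact hQ.forall_notMem_of_card_eq_one h₁ hS₁ v hv
    · exact hQ.forall_notMem_of_card_eq_one h₂ hS₂ v hv
  obtain ⟨v, hv⟩ := hne S₁ h₁
  have hnotin : S₁ ∪ S₂ ∉ Q := fun h => hfree v (mem_union_left _ hv) _ h (mem_union_left _ hv)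
  have := hmax _ (hQ.insert (by rw [hcard, hS₁, hS₂]) hgood
    fun S' hS' => Finset.disjoint_left.2 fun w hw => hfree w hw S' hS')
  rw [card_insert_of_notMem hnotin] at this
  omega

end GoodMatching

section ParentClosed

variable {V : Type*} [Fintype V] [DecidableEq V] {T : SimpleGraph V} {r : V} {U : Finset V}

def IsParentClosed (T : SimpleGraph V) (r : V) (U : Finset V) : Prop :=
  ∀ ⦃u v⦄, T.Adj u v → T.dist r u + 1 = T.dist r v → v ∈ U → u ∈ U

lemma card_le_four_of_forall_dist_le_one (hT : T.Connected) (hdeg : T.degree r ≤ 3)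
    (hU : ∀ v ∈ U, T.dist r v ≤ 1) : #U ≤ 4 := by
  have hsub : U ⊆ insert r (T.neighborFinset r) := fun v hv => by
    rcases (hU v hv).lt_or_eq with h | h
    · simp [(hT.dist_eq_zero_iff (u := r) (v := v)).1 (by omega)]
    · simp [dist_eq_one_iff_adj.1 h]
  calc #U ≤ #(insert r (T.neighborFinset r)) := card_le_card hsub
    _ ≤ T.degree r + 1 := by rw [← card_neighborFinset_eq_degree]; exact card_insert_le _ _
    _ ≤ 4 := by omega

/-- `p` is the parent of a deepest vertex of `U`, `q` its parent and `C` its children in `U`. -/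
lemma IsParentClosed.exists_pendantStar (hU : IsParentClosed T r U) (hT : T.IsTree)
    (hdeg : ∀ v, T.degree v ≤ 3) (hcard : 4 < #U) :
    ∃ p ∈ U, ∃ q, ∃ C : Finset V, q ∉ C ∧ C.Nonempty ∧ T.neighborFinset p ∩ U = insert q C ∧
      (∀ c ∈ C, T.neighborFinset c ∩ U = {p}) ∧ IsParentClosed T r (U \ insert p C) := by
  obtain ⟨ℓ, hℓ, hmax⟩ := U.exists_max_image (T.dist r) (card_pos.1 (by omega))
  have hdepth : 2 ≤ T.dist r ℓ := by
    by_contra! h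
    have := card_le_four_of_forall_dist_le_one hT.connected (hdeg r) fun v hv => by
      have := hmax v hv
      omega
    omega
  obtain ⟨p, hℓp, hpℓ⟩ := hT.connected.exists_adj_dist_add_one (r := r) (u := ℓ)
    (by rintro rfl; simp at hdepth)
  obtain ⟨q, hpq, hqp⟩ := hT.connected.exists_adj_dist_add_one (r := r) (u := p)
    (by rintro rfl; simp at hpℓ; omega)
  have hpU : p ∈ U := hU hℓp.symm hpℓ hℓ
  have hqU : q ∈ U := hU hpq.symm hqp hpU
  set C := (T.neighborFinset p ∩ U).erase q
  have hdistC : ∀ c ∈ C, T.Adj c p ∧ T.dist r p + 1 = T.dist r c := by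
    intro c hc
    simp only [C, mem_erase, mem_inter, mem_neighborFinset] at hc
    refine ⟨hc.2.1.symm, ?_⟩
    rcases hT.dist_eq_dist_add_one_of_adj r hc.2.1 with h | h
    · exact absurd (hT.eq_of_adj_of_dist_add_one r hc.2.1 hpq h.symm hqp) hc.1
    · exact h.symm
  have hleaf : ∀ c ∈ C, T.neighborFinset c ∩ U = {p} := by
    intro c hc
    obtain ⟨hcp, hd⟩ := hdistC c hc
    ext y
    simp only [mem_inter, mem_neighborFinset, mem_singleton]
    refine ⟨fun ⟨hcy, hy⟩ => ?_, by rintro rfl; exact ⟨hcp, hpU⟩⟩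
    have := hmax y hy
    rcases hT.dist_eq_dist_add_one_of_adj r hcy with h | h
    · exact hT.eq_of_adj_of_dist_add_one r hcy hcp h.symm hd
    · omega
  have hℓC : ℓ ∈ C := by
    simp only [C, mem_erase, mem_inter, mem_neighborFinset]
    exact ⟨by rintro rfl; omega, hℓp.symm, hℓ⟩
  refine ⟨p, hpU, q, C, by simp [C], ⟨ℓ, hℓC⟩,
    (insert_erase (mem_inter.2 ⟨(mem_neighborFinset _ _ _).2 hpq, hqU⟩)).symm, hleaf, ?_⟩
  intro u v huv hd hv
  simp only [mem_sdiff, mem_insert, not_or] at hv ⊢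
  refine ⟨hU huv hd hv.1, ?_, fun hu => hv.2.1 ?_⟩
  · rintro rfl
    refine hv.2.2 (mem_erase.2 ⟨?_, mem_inter.2 ⟨(mem_neighborFinset _ _ _).2 huv, hv.1⟩⟩)
    rintro rfl
    omega
  · have hvu : v ∈ T.neighborFinset u ∩ U := mem_inter.2 ⟨(mem_neighborFinset _ _ _).2 huv, hv.1⟩
    rwa [hleaf u hu, mem_singleton] at hvu

lemma adj_of_neighborFinset_inter_eq_singleton {c p : V}
    (h : T.neighborFinset c ∩ U = {p}) : T.Adj c p :=
  (mem_neighborFinset _ _ _).1 (mem_inter.1 (h ▸ mem_singleton_self p)).1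

lemma sum_card_neighborFinset_sdiff_le {p q : V} {C : Finset V}
    (hNp : T.neighborFinset p ∩ U = insert q C) (hleaf : ∀ c ∈ C, T.neighborFinset c ∩ U = {p}) :
    ∑ v ∈ U \ insert p C, #(T.neighborFinset v \ (U \ insert p C)) ≤
      ∑ v ∈ U \ insert p C, #(T.neighborFinset v \ U) + 1 := by
  have key : ∀ v ∈ U \ insert p C, #(T.neighborFinset v \ (U \ insert p C)) ≤
      #(T.neighborFinset v \ U) + if v = q then 1 else 0 := by
    intro v hv
    simp only [mem_sdiff, mem_insert, not_or] at hv
    have hsub : T.neighborFinset v \ (U \ insert p C) ⊆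
        (if v = q then {p} else ∅) ∪ (T.neighborFinset v \ U) := by
      intro w hw
      simp only [mem_sdiff, mem_insert, not_and, not_not, mem_neighborFinset] at hw
      by_cases hwU : w ∈ U
      · rcases hw.2 hwU with rfl | hwC
        · have hvq : v ∈ insert q C :=
            hNp ▸ mem_inter.2 ⟨(mem_neighborFinset _ _ _).2 hw.1.symm, hv.1⟩
          rcases mem_insert.1 hvq with rfl | hvC
          · simp
          · exact absurd hvC hv.2.2
        · have hvw : v ∈ T.neighborFinset w ∩ U :=
            mem_inter.2 ⟨(mem_neighborFinset _ _ _).2 hw.1.symm, hv.1⟩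
          rw [hleaf w hwC, mem_singleton] at hvw
          exact absurd hvw hv.2.1
      · simp [hw.1, hwU]
    refine (card_le_card hsub).trans ((card_union_le _ _).trans ?_)
    split_ifs <;> simp [add_comm]
  calc ∑ v ∈ U \ insert p C, #(T.neighborFinset v \ (U \ insert p C))
      ≤ ∑ v ∈ U \ insert p C, (#(T.neighborFinset v \ U) + if v = q then 1 else 0) :=
        sum_le_sum key
    _ ≤ _ := by
        rw [sum_add_distrib, sum_ite_eq']
        split_ifs <;> simp

lemma two_le_sum_card_neighborFinset_sdiff (hdeg : ∀ v, T.degree v ≤ 3) {p q : V}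
    {C : Finset V} (hqC : q ∉ C) (hC : C.Nonempty) (hNp : T.neighborFinset p ∩ U = insert q C)
    (hleaf : ∀ c ∈ C, T.neighborFinset c ∩ U = {p})
    (hheavy : ∀ c ∈ C, 4 < T.degree c + T.degree p) :
    2 ≤ ∑ v ∈ insert p C, #(T.neighborFinset v \ U) := by
  have hpC : p ∉ C := fun hp => (adj_of_neighborFinset_inter_eq_singleton (hleaf p hp)).ne rfl
  have hdeg_eq v : #(T.neighborFinset v ∩ U) + #(T.neighborFinset v \ U) = T.degree v := by
    rw [card_inter_add_card_sdiff, card_neighborFinset_eq_degree]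
  have hdegp := hdeg_eq p
  rw [hNp, card_insert_of_notMem hqC] at hdegp
  have hC' : #C * (4 - T.degree p) ≤ ∑ c ∈ C, #(T.neighborFinset c \ U) := by
    rw [← smul_eq_mul]
    refine card_nsmul_le_sum _ _ _ fun c hc => ?_
    have := hdeg_eq c
    rw [hleaf c hc, card_singleton] at this
    have := hheavy c hc
    omega
  rw [sum_insert hpC]
  have := hdeg p
  have := card_pos.2 hC
  have : #C ≤ 2 := by omega
  interval_cases h : #C <;> omega

lemma exists_isGoodMatching_of_pendantStar (hdeg : ∀ v, T.degree v ≤ 3) {p q : V}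
    {C : Finset V} (hp : p ∈ U) (hqC : q ∉ C) (hC : C.Nonempty)
    (hNp : T.neighborFinset p ∩ U = insert q C) (hleaf : ∀ c ∈ C, T.neighborFinset c ∩ U = {p})
    {Q : Finset (Finset V)} (hQ : IsGoodMatching T Q) (hQU : ∀ S ∈ Q, S ⊆ U \ insert p C)
    (hbound : #(U \ insert p C) ≤
      6 * #Q + 5 + 3 * ∑ v ∈ U \ insert p C, #(T.neighborFinset v \ (U \ insert p C))) :
    ∃ Q', IsGoodMatching T Q' ∧ (∀ S ∈ Q', S ⊆ U) ∧
      #U ≤ 6 * #Q' + 5 + 3 * ∑ v ∈ U, #(T.neighborFinset v \ U) := by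
  have hpC : p ∉ C := fun hp => (adj_of_neighborFinset_inter_eq_singleton (hleaf p hp)).ne rfl
  have hCU : C ⊆ U := fun c hc => (mem_inter.1 (hNp ▸ mem_insert_of_mem hc)).2
  have hWU : insert p C ⊆ U := insert_subset hp hCU
  have hW : #(insert p C) ≤ 3 := by
    rw [card_insert_of_notMem hpC, ← card_insert_of_notMem hqC, ← hNp]
    exact (card_le_card inter_subset_left).trans ((card_neighborFinset_eq_degree _ _).le.trans
      (hdeg p))
  have hcard := card_sdiff_add_card_eq_card hWU
  have hsplit := sum_sdiff hWU (f := fun v => #(T.neighborFinset v \ U))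
  have hexit := sum_card_neighborFinset_sdiff_le hNp hleaf
  have hQU' : ∀ S ∈ Q, S ⊆ U := fun S hS => (hQU S hS).trans sdiff_subset
  by_cases hlight : ∃ c ∈ C, T.degree c + T.degree p ≤ 4
  · obtain ⟨c, hc, hcp⟩ := hlight
    have hadj := adj_of_neighborFinset_inter_eq_singleton (hleaf c hc)
    have hnotin : {c, p} ∉ Q := fun h => (mem_sdiff.1 (hQU _ h (by simp))).2 (mem_insert_self p C)
    refine ⟨insert {c, p} Q, hQ.insert (card_pair hadj.ne) (goodSet_pair le_rfl hadj hcp)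
      fun S hS => ?_, fun S hS => ?_, ?_⟩
    · refine disjoint_of_subset_right (hQU S hS) (Finset.disjoint_left.2 fun v hv hv' => ?_)
      simp only [mem_insert, mem_singleton] at hv
      rcases hv with rfl | rfl <;> simp [hc] at hv'
    · rcases mem_insert.1 hS with rfl | hS
      · exact insert_subset (hCU hc) (singleton_subset_iff.2 hp)
      · exact hQU' S hS
    · rw [card_insert_of_notMem hnotin]
      omega
  · push Not at hlight
    have := two_le_sum_card_neighborFinset_sdiff hdeg hqC hC hNp hleaf hlight
    exact ⟨Q, hQ, hQU', by omega⟩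

theorem exists_isGoodMatching (hT : T.IsTree) (hdeg : ∀ v, T.degree v ≤ 3)
    (hU : IsParentClosed T r U) :
    ∃ Q, IsGoodMatching T Q ∧ (∀ S ∈ Q, S ⊆ U) ∧
      #U ≤ 6 * #Q + 5 + 3 * ∑ v ∈ U, #(T.neighborFinset v \ U) := by
  induction hn : #U using Nat.strong_induction_on generalizing U with
  | _ n ih =>
  subst hn
  by_cases hsmall : #U ≤ 5
  · exact ⟨∅, isGoodMatching_empty, by simp, by omega⟩
  obtain ⟨p, hp, q, C, hqC, hC, hNp, hleaf, hclosed⟩ := hU.exists_pendantStar hT hdeg (by omega)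
  have hlt : #(U \ insert p C) < #U := card_lt_card
    (sdiff_subset.ssubset_of_not_subset fun h => (mem_sdiff.1 (h hp)).2 (mem_insert_self p C))
  obtain ⟨Q, hQ, hQU, hbound⟩ := ih _ hlt hclosed rfl
  exact exists_isGoodMatching_of_pendantStar hdeg hp hqC hC hNp hleaf hQ hQU hbound

end ParentClosed

theorem exists_isRestrictedPartition_two {V : Type*} [Fintype V] [DecidableEq V]
    {T : SimpleGraph V} {r : V} (hT : IsBinaryRootedTree T r) :
    ∃ P, IsRestrictedPartition T 2 P ∧ 6 * #P ≤ 5 * Fintype.card V + 5 := by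
  obtain ⟨Q₀, hQ₀, -, hQ₀card⟩ := exists_isGoodMatching (r := r) (U := univ) hT.1 hT.degree_le_three
    (fun _ _ _ _ _ => mem_univ _)
  simp only [fun v => sdiff_eq_empty_iff_subset.2 (subset_univ (T.neighborFinset v)), card_empty,
    sum_const_zero, mul_zero, add_zero, card_univ] at hQ₀card
  obtain ⟨Q, hQ, hmax⟩ := (univ.filter (IsGoodMatching T)).exists_max_image card
    ⟨Q₀, mem_filter.2 ⟨mem_univ _, hQ₀⟩⟩
  have hQ : IsGoodMatching T Q := (mem_filter.1 hQ).2
  have hmax' : ∀ Q', IsGoodMatching T Q' → #Q' ≤ #Q :=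
    fun Q' hQ' => hmax Q' (mem_filter.2 ⟨mem_univ _, hQ'⟩)
  have hP := hQ.isRestrictedPartition hmax'
  have := hP.card_add_card_le subset_union_left fun S hS => (hQ.1 S hS).1.ge
  have := hmax' Q₀ hQ₀
  exact ⟨_, hP, by omega⟩

/-- Any restricted partition of order `z` of a rooted binary tree on `n` vertices
has `O(n/z)` sets; and for `z = 2` there exists a restricted partition with at
most `⌈5n/6⌉` sets. -/
theorem restricted_partition_bounds :
    ∃ C : ℕ,
      (∀ (V : Type) (_ : Fintype V) (_ : DecidableEq V) (T : SimpleGraph V) (r : V)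
          (z : ℕ) (P : Finset (Finset V)), 2 ≤ z → z ≤ Fintype.card V →
          IsBinaryRootedTree T r → IsRestrictedPartition T z P →
          P.card * z ≤ C * Fintype.card V) ∧
      (∀ (V : Type) (_ : Fintype V) (_ : DecidableEq V) (T : SimpleGraph V) (r : V),
          IsBinaryRootedTree T r →
          ∃ P : Finset (Finset V), IsRestrictedPartition T 2 P ∧
            P.card ≤ (5 * Fintype.card V + 5) / 6) := by
  refine ⟨31, fun V _ _ T r z P _ hz hT hP => hP.card_mul_le hT.1 hT.degree_le_three hz,
    fun V _ _ T r hT => ?_⟩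
  obtain ⟨P, hP, hcard⟩ := exists_isRestrictedPartition_two hT
  exact ⟨P, hP, (Nat.le_div_iff_mul_le (by norm_num)).2 (by omega)⟩
end

section
/- In an iterative reweighting algorithm where each iteration multiplies the total cost of all elements by a factor of at most 1 + 1/(3d) while multiplying the cost of a fixed set of 2d special elements by at least 1 + 1/(2d) (by doubling the cost of at least one special element each iteration, starting from unit costs on N elements), the algorithm must terminate within O(d log N) iterations, since otherwise the cost of the special set would exceed the total cost. -/
/-!
Costs never drop below 1, so in every iteration the product of the costs of the `2d`
distinguished elements at least doubles: one factor doubles and the others do not decrease.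
After `t` iterations this product is at least `2 ^ t`, while each of its factors is at most the
total cost `N (1 + 1/(3d)) ^ t`. Hence `2 ^ t ≤ (N (1 + 1/(3d)) ^ t) ^ (2d) ≤ N ^ (2d) e ^ (2t/3)`,
and since `log 2 > 2/3` this forces `t = O(d log N)`.
-/

open Finset Real

theorem two_mul_prod_le_prod_of_le_of_doubling {ι : Type*} {s : Finset ι} {f g : ι → ℝ}
    (hf : ∀ i ∈ s, 0 ≤ f i) (hfg : ∀ i ∈ s, f i ≤ g i) {j : ι} (hj : j ∈ s)
    (hg : g j = 2 * f j) : 2 * ∏ i ∈ s, f i ≤ ∏ i ∈ s, g i := by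
  classical
  rw [← mul_prod_erase s f hj, ← mul_prod_erase s g hj, hg, mul_assoc]
  gcongr with i hi
  · exact hf j hj
  · exact fun i hi => hf i (mem_of_mem_erase hi)
  · exact hfg i (mem_of_mem_erase hi)

theorem prod_le_pow_card_of_nonneg {ι : Type*} {s : Finset ι} {f : ι → ℝ} {b : ℝ}
    (hf : ∀ i ∈ s, 0 ≤ f i) (hb : ∀ i ∈ s, f i ≤ b) : ∏ i ∈ s, f i ≤ b ^ s.card := by
  simpa using prod_le_prod hf hb

theorem log_natCast_le_succ_log_mul_log_two (N : ℕ) :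
    Real.log N ≤ (Nat.log 2 N + 1) * Real.log 2 := by
  rcases N.eq_zero_or_pos with rfl | hN
  · simpa using (log_pos one_lt_two).le
  have hlt : (N : ℝ) < 2 ^ (Nat.log 2 N + 1) := by
    exact_mod_cast Nat.lt_pow_succ_log_self one_lt_two N
  calc Real.log N ≤ Real.log (2 ^ (Nat.log 2 N + 1)) := log_le_log (by positivity) hlt.le
    _ = (Nat.log 2 N + 1) * Real.log 2 := by rw [Real.log_pow]; push_cast; ring

theorem le_mul_succ_log_of_two_pow_le {d N n : ℕ} (hd : 1 ≤ d) (hN : 1 ≤ N)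
    (h : (2 : ℝ) ^ n ≤ ((1 + 1 / (3 * d)) ^ n * N) ^ (2 * d)) :
    n ≤ 100 * d * (Nat.log 2 N + 1) := by
  have hd0 : (0 : ℝ) < d := by exact_mod_cast hd
  have hN0 : (0 : ℝ) < N := by exact_mod_cast hN
  have hlog := log_le_log (by positivity) h
  rw [Real.log_pow, Real.log_pow, Real.log_mul (by positivity) hN0.ne', Real.log_pow] at hlog
  have hr : Real.log (1 + 1 / (3 * d)) ≤ 1 / (3 * d) := by
    linarith [log_le_sub_one_of_pos (by positivity : (0 : ℝ) < 1 + 1 / (3 * d))]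
  have hsum : 2 * (d : ℝ) * (n * (1 / (3 * d))) = 2 / 3 * n := by field_simp
  have hlog2 := log_two_gt_d9
  have hLN := log_natCast_le_succ_log_mul_log_two N
  have key : (n : ℝ) * Real.log 2 ≤ 2 * d * ((Nat.log 2 N + 1) * Real.log 2) + 2 / 3 * n := by
    push_cast at hlog
    nlinarith [mul_le_mul_of_nonneg_left hr (Nat.cast_nonneg n : (0 : ℝ) ≤ n)]
  -- `100 (log 2 - 2/3) > 2 log 2`
  have : (n : ℝ) ≤ 100 * d * (Nat.log 2 N + 1) := by nlinarith
  exact_mod_cast this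

/-- **Termination of the iterative reweighting algorithm.**  Elements of a finite
set `E` of size `N` start with unit costs; `D ⊆ E` is a distinguished set of `2d`
special elements.  In each of `steps` iterations, costs never decrease, the total
cost of all elements increases by a factor of at most `1 + 1/(3d)`, and the cost
of at least one distinguished element is doubled.  Then the algorithm terminates
within `O(d log N)` iterations: `steps ≤ C·d·(log₂ N + 1)` for an absolute
constant `C`, since otherwise the cost of the distinguished set would exceed the
total cost. -/
theorem reweighting_terminates :
    ∃ C : ℕ, ∀ (ι : Type) (E D : Finset ι) (d N steps : ℕ)
      (cost : ℕ → ι → ℝ),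
      1 ≤ d → 2 ≤ N → D ⊆ E → E.card = N → D.card = 2 * d →
      (∀ i ∈ E, cost 0 i = 1) →
      (∀ t < steps, ∀ i ∈ E, cost t i ≤ cost (t + 1) i) →
      (∀ t < steps, ∑ i ∈ E, cost (t + 1) i ≤
          (1 + 1 / (3 * (d : ℝ))) * ∑ i ∈ E, cost t i) →
      (∀ t < steps, ∃ i ∈ D, cost (t + 1) i = 2 * cost t i) →
      steps ≤ C * d * (Nat.log 2 N + 1) := by
  refine ⟨100, fun ι E D d N steps cost hd hN hDE hE hD h0 hmono htotal hdouble => ?_⟩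
  have hone : ∀ t ≤ steps, ∀ i ∈ E, 1 ≤ cost t i := fun t ht i hi => by
    have := geom_le (u := (cost · i)) zero_le_one t fun k hk => by
      simpa using hmono k (by omega) i hi
    rwa [one_pow, one_mul, h0 i hi] at this
  have hnonneg : ∀ t ≤ steps, ∀ i ∈ E, 0 ≤ cost t i := fun t ht i hi =>
    zero_le_one.trans (hone t ht i hi)
  have hsum : ∑ i ∈ E, cost steps i ≤ (1 + 1 / (3 * (d : ℝ))) ^ steps * N := by
    have := le_geom (u := (∑ i ∈ E, cost · i)) (by positivity) steps htotal
    rwa [sum_congr rfl h0, sum_const, hE, nsmul_one] at this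
  have hprod : (2 : ℝ) ^ steps ≤ ∏ i ∈ D, cost steps i := by
    have := geom_le (u := (∏ i ∈ D, cost · i)) zero_le_two steps fun t ht => by
      obtain ⟨j, hj, hdbl⟩ := hdouble t ht
      exact two_mul_prod_le_prod_of_le_of_doubling
        (fun i hi => hnonneg t ht.le i (hDE hi)) (fun i hi => hmono t ht i (hDE hi)) hj hdbl
    rwa [prod_congr rfl fun i hi => h0 i (hDE hi), prod_const_one, mul_one] at this
  refine le_mul_succ_log_of_two_pow_le hd (by omega) ?_
  calc (2 : ℝ) ^ steps ≤ ∏ i ∈ D, cost steps i := hprod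
    _ ≤ (∑ i ∈ E, cost steps i) ^ (2 * d) := by
      rw [← hD]
      exact prod_le_pow_card_of_nonneg (fun i hi => hnonneg steps le_rfl i (hDE hi))
        fun i hi => single_le_sum (hnonneg steps le_rfl) (hDE hi)
    _ ≤ ((1 + 1 / (3 * d)) ^ steps * N) ^ (2 * d) := by
      gcongr
      exact sum_nonneg (hnonneg steps le_rfl)
end

section
/- Let T be a spanning tree of weighted graph G, let M be a minimum spanning tree of G, and let X = M \ T. If a tree edge e ∈ T participates in any violated swap constraint (i.e., some swap (e,f) has w(f) ≤ w(e)), then the swap (e,f₀) is violated, where f₀ is the minimum-weight edge of X forming a swap with e. -/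
open SimpleGraph
open scoped Classical

open scoped Classical in
/-- Total weight of (the edges of) a graph. -/
noncomputable def treeWeight {V : Type*} [Fintype V] (T : SimpleGraph V)
    (w : Sym2 V → ℝ) : ℝ :=
  ∑ e ∈ T.edgeFinset, w e

/-! Removing `e` from `T` splits the vertices into two sides, and the swaps `(e, f)` are exactly
the edges `f ≠ e` of `G` joining the two sides. If `(e, f)` is violated and `f ∉ M`, the path of
`M` between the ends of `f` crosses the cut at some edge `g`; exchanging `g` for `f` in `M` gives
a spanning tree, so minimality of `M` gives `w g ≤ w f < w e`. Hence some edge of `X = M \ T`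
is a violated swap partner of `e`, and then so is the lightest one. -/

namespace SimpleGraph

variable {V : Type*} {K : SimpleGraph V}

lemma Preconnected.reachable_deleteEdges_or (hK : K.Preconnected) (u v c : V) :
    (K.deleteEdges {s(u, v)}).Reachable c u ∨ (K.deleteEdges {s(u, v)}).Reachable c v := by
  obtain ⟨p, hp⟩ := hK.exists_isPath c u
  by_cases huv : s(u, v) ∈ p.edges
  · have hne : u ≠ v := by
      simpa using K.not_isDiag_of_mem_edgeSet (p.edges_subset_edgeSet huv)
    have hv := p.snd_mem_support_of_mem_edges huv
    refine .inr ⟨(p.takeUntil v hv).toDeleteEdges {s(u, v)} ?_⟩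
    rintro _ he rfl
    exact Walk.endpoint_notMem_support_takeUntil hp hv hne
      ((p.takeUntil v hv).fst_mem_support_of_mem_edges he)
  · exact .inl ⟨p.toDeleteEdges {s(u, v)} fun _ he h => huv (by simp_all)⟩

lemma IsAcyclic.not_reachable_deleteEdges_of_mem_edges_s14 (hK : K.IsAcyclic) {a b : V}
    {p : K.Walk a b} (hp : p.IsPath) {g : Sym2 V} (hg : g ∈ p.edges) :
    ¬(K.deleteEdges {g}).Reachable a b := by
  induction g with | h u v =>
  rw [reachable_deleteEdges_iff_exists_walk]
  rintro ⟨q, hq⟩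
  have hpq := congrArg (fun r : K.Path a b => r.1.edges)
    ((hK.subsingleton_path a b).elim ⟨p, hp⟩ q.toPath)
  exact hq (q.edges_toPath_subset_edges (hpq ▸ hg))

lemma fromEdgeSet_insert_sdiff_eq {a b : V} {g : Sym2 V} (h : s(a, b) ≠ g) :
    fromEdgeSet (insert s(a, b) K.edgeSet \ {g}) = K.deleteEdges {g} ⊔ edge a b := by
  ext u v
  simp only [fromEdgeSet_adj, sup_adj, deleteEdges_adj, edge_adj, Set.mem_sdiff,
    Set.mem_insert_iff, Set.mem_singleton_iff, mem_edgeSet, Sym2.eq_iff]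
  constructor
  · rintro ⟨⟨h1 | h1, h2⟩, h3⟩
    · exact .inr ⟨by tauto, h3⟩
    · exact .inl ⟨h1, h2⟩
  · rintro (⟨h1, h2⟩ | ⟨h1, h3⟩)
    · exact ⟨⟨.inr h1, h2⟩, h1.ne⟩
    · refine ⟨⟨.inl (by tauto), ?_⟩, h3⟩
      rcases h1 with ⟨rfl, rfl⟩ | ⟨rfl, rfl⟩
      · exact h
      · rwa [Sym2.eq_swap]

lemma IsTree.deleteEdges_sup_edge (hK : K.IsTree) {u v a b : V}
    (hab : ¬(K.deleteEdges {s(u, v)}).Reachable a b) :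
    (K.deleteEdges {s(u, v)} ⊔ edge a b).IsTree := by
  set K' := K.deleteEdges {s(u, v)}
  have hle : K' ≤ K' ⊔ edge a b := le_sup_left
  have hside := hK.connected.preconnected.reachable_deleteEdges_or u v
  have hab' : (K' ⊔ edge a b).Adj a b :=
    .inr ((edge_adj a b a b).mpr ⟨by tauto, fun h => hab (h ▸ .refl a)⟩)
  have huv : (K' ⊔ edge a b).Reachable u v := by
    rcases hside a with ha | ha <;> rcases hside b with hb | hb
    · exact absurd (ha.trans hb.symm) hab
    · exact ((ha.mono hle).symm.trans hab'.reachable).trans (hb.mono hle)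
    · exact ((hb.mono hle).symm.trans hab'.symm.reachable).trans (ha.mono hle)
    · exact absurd (ha.trans hb.symm) hab
  refine ⟨(connected_iff_exists_forall_reachable _).mpr ⟨u, fun c => ?_⟩,
    (hK.isAcyclic.anti (deleteEdges_le _)).sup_edge_of_not_reachable hab⟩
  rcases hside c with hc | hc
  · exact (hc.mono hle).symm
  · exact huv.trans (hc.mono hle).symm

lemma not_reachable_of_isAcyclic_sup_edge {H : SimpleGraph V} {a b : V}
    (h : (H ⊔ edge a b).IsAcyclic) (hab : a ≠ b) (hH : ¬H.Adj a b) : ¬H.Reachable a b :=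
  fun hr => ((isAcyclic_sup_fromEdgeSet_iff.mp h).2 hr).elim hab hH

end SimpleGraph

section Swap

variable {V : Type*} {G T : SimpleGraph V}

lemma treeWeight_deleteEdges_sup_edge [Fintype V] (w : Sym2 V → ℝ) {g : Sym2 V}
    (hg : g ∈ T.edgeSet) {a b : V} (hab : a ≠ b) (hf : s(a, b) ∉ T.edgeSet) :
    treeWeight (T.deleteEdges {g} ⊔ edge a b) w = treeWeight T w - w g + w s(a, b) := by
  have hfg : s(a, b) ∉ T.edgeFinset.erase g := by simp [hf]
  unfold treeWeight
  rw [Finset.sum_congr (s₂ := insert s(a, b) (T.edgeFinset.erase g)) ?_ fun _ _ => rfl,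
    Finset.sum_insert hfg, Finset.sum_erase_eq_sub (mem_edgeFinset.mpr hg)]
  · ring
  · ext f
    simp only [edgeFinset_sup, Finset.mem_union, mem_edgeFinset, edgeSet_deleteEdges,
      Set.mem_sdiff, Set.mem_singleton_iff, edgeSet_edge_of_ne hab, Finset.mem_insert,
      Finset.mem_erase]
    tauto

lemma IsSpanningTree.deleteEdges_sup_edge (hT : IsSpanningTree G T) {u v a b : V}
    (hab : G.Adj a b) (hsep : ¬(T.deleteEdges {s(u, v)}).Reachable a b) :
    IsSpanningTree G (T.deleteEdges {s(u, v)} ⊔ edge a b) :=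
  ⟨sup_le ((deleteEdges_le _).trans hT.1) ((edge_le_iff _).mpr (.inr hab)),
    hT.2.deleteEdges_sup_edge hsep⟩

lemma IsSwap.not_reachable_deleteEdges {e : Sym2 V} {a b : V} (h : IsSwap G T e s(a, b)) :
    ¬(T.deleteEdges {e}).Reachable a b := by
  obtain ⟨he, hab, hfT, -, htree⟩ := h
  rw [fromEdgeSet_insert_sdiff_eq fun h => hfT (h ▸ he)] at htree
  exact not_reachable_of_isAcyclic_sup_edge htree.isAcyclic (G.ne_of_adj hab)
    fun h => hfT ((deleteEdges_adj ..).mp h).1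

lemma isSwap_of_not_reachable (hT : IsSpanningTree G T) {x y a b : V} (hxy : T.Adj x y)
    (hab : G.Adj a b) (hne : s(a, b) ≠ s(x, y))
    (hsep : ¬(T.deleteEdges {s(x, y)}).Reachable a b) : IsSwap G T s(x, y) s(a, b) := by
  have hfT : s(a, b) ∉ T.edgeSet := fun h =>
    hsep ((deleteEdges_adj ..).mpr ⟨h, by simpa using hne⟩).reachable
  refine ⟨hxy, hab, hfT, ?_⟩
  rw [fromEdgeSet_insert_sdiff_eq hne]
  exact hT.deleteEdges_sup_edge hab hsep

def IsMinSpanningTree [Fintype V] (G M : SimpleGraph V) (w : Sym2 V → ℝ) : Prop :=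
  IsSpanningTree G M ∧
    ∀ T' : SimpleGraph V, IsSpanningTree G T' → treeWeight M w ≤ treeWeight T' w

lemma IsMinSpanningTree.weight_le_of_not_reachable [Fintype V] {M : SimpleGraph V}
    {w : Sym2 V → ℝ} (hM : IsMinSpanningTree G M w) {c d a b : V} (hcd : M.Adj c d)
    (hab : G.Adj a b) (hf : s(a, b) ∉ M.edgeSet)
    (hsep : ¬(M.deleteEdges {s(c, d)}).Reachable a b) : w s(c, d) ≤ w s(a, b) := by
  have hmin := hM.2 _ (hM.1.deleteEdges_sup_edge hab hsep)
  rw [treeWeight_deleteEdges_sup_edge w hcd hab.ne hf] at hmin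
  linarith

theorem exists_isSwap_mem_weight_le [Fintype V] {M : SimpleGraph V} {w : Sym2 V → ℝ}
    (hT : IsSpanningTree G T) (hM : IsMinSpanningTree G M w) {e f : Sym2 V}
    (hsw : IsSwap G T e f) (hwf : w f < w e) :
    ∃ g ∈ M.edgeSet, IsSwap G T e g ∧ w g ≤ w f := by
  by_cases hfM : f ∈ M.edgeSet
  · exact ⟨f, hfM, hsw, le_rfl⟩
  induction e with | h x y =>
  induction f with | h a b =>
  obtain ⟨p, hp⟩ := hM.1.2.connected.exists_isPath a b
  -- `d` is where the `M`-path from `a` to `b` leaves the side of `a` in `T - e`.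
  obtain ⟨d, hd, hda, hdb⟩ := p.exists_boundary_dart
    {z | (T.deleteEdges {s(x, y)}).Reachable a z} (.refl a) hsw.not_reachable_deleteEdges
  have hwd : w s(d.fst, d.snd) ≤ w s(a, b) := hM.weight_le_of_not_reachable d.adj hsw.2.1 hfM
    (hM.1.2.isAcyclic.not_reachable_deleteEdges_of_mem_edges_s14 hp (List.mem_map_of_mem hd))
  refine ⟨_, d.adj, isSwap_of_not_reachable hT hsw.1 (hM.1.1 d.adj)
    (fun h => (hwd.trans_lt hwf).ne (congrArg w h)) fun h => hdb (hda.trans h), hwd⟩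

end Swap

theorem min_swap_edge_violated_general {V : Type*} [Fintype V] [DecidableEq V]
    (G T M : SimpleGraph V) (w : Sym2 V → ℝ)
    (hT : IsSpanningTree G T)
    (hM : IsSpanningTree G M ∧
      ∀ T' : SimpleGraph V, IsSpanningTree G T' → treeWeight M w ≤ treeWeight T' w)
    (e : Sym2 V)
    (hviol : ∃ f : Sym2 V, IsSwap G T e f ∧ w f < w e) :
    ∃ f₀ ∈ M.edgeFinset \ T.edgeFinset, IsSwap G T e f₀ ∧
      (∀ f ∈ M.edgeFinset \ T.edgeFinset, IsSwap G T e f → w f₀ ≤ w f) ∧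
      w f₀ < w e := by
  obtain ⟨f, hsw, hwf⟩ := hviol
  obtain ⟨g, hgM, hgsw, hwg⟩ := exists_isSwap_mem_weight_le hT hM hsw hwf
  set S := (M.edgeFinset \ T.edgeFinset).filter (IsSwap G T e)
  have hgS : g ∈ S := by simp [S, hgM, hgsw, hgsw.2.2.1]
  obtain ⟨f₀, hf₀, hmin⟩ := S.exists_min_image w ⟨g, hgS⟩
  rw [Finset.mem_filter] at hf₀
  exact ⟨f₀, hf₀.1, hf₀.2, fun f hf hsw => hmin f (Finset.mem_filter.mpr ⟨hf, hsw⟩),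
    (hmin g hgS).trans_lt (hwg.trans_lt hwf)⟩

/-- Let `T` be a spanning tree of `G`, `M` a minimum spanning tree, and
`X = M \ T`.  If a tree edge `e ∈ T` participates in any violated swap
constraint (some swap `(e,f)` with `w f < w e`), then the swap `(e,f₀)` is
violated, where `f₀` is the minimum-weight edge of `X` forming a swap with `e`. -/
theorem min_swap_edge_violated {V : Type*} [Fintype V] [DecidableEq V]
    (G T M : SimpleGraph V) (w : Sym2 V → ℝ)
    (hw : ∀ e ∈ G.edgeSet, ∀ f ∈ G.edgeSet, w e = w f → e = f)
    (hG : G.Connected) (hT : IsSpanningTree G T)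
    (hM : IsSpanningTree G M ∧
      ∀ T' : SimpleGraph V, IsSpanningTree G T' → treeWeight M w ≤ treeWeight T' w)
    (e : Sym2 V) (he : e ∈ T.edgeSet)
    (hviol : ∃ f : Sym2 V, IsSwap G T e f ∧ w f < w e) :
    ∃ f₀ ∈ M.edgeFinset \ T.edgeFinset, IsSwap G T e f₀ ∧
      (∀ f ∈ M.edgeFinset \ T.edgeFinset, IsSwap G T e f → w f₀ ≤ w f) ∧
      w f₀ < w e :=
  min_swap_edge_violated_general G T M w hT hM e hviol
end

section
/- The number of edges of a minimum spanning tree M not contained in a spanning tree T equals the number of edges of T not contained in M, and every edge of T \ M participates in a violated swap constraint (a swap (e,f) with w(f) < w(e)). -/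
open SimpleGraph
open scoped Classical

/-!
Both trees have `|V| - 1` edges, which gives the counting statement. For `e = uv ∈ T \ M`,
deleting `e` splits `T` into a `u`-side and a `v`-side; the `M`-path from `u` to `v` leaves the
`u`-side along some edge `f ∈ M \ T`. Then `T - e + f` is a spanning tree, and since `f` lies on
the unique `M`-path between `u` and `v`, so is `M - f + e`. Minimality of `M` gives
`w f ≤ w e`, and the weights are distinct.
-/

namespace SimpleGraph

variable {V : Type*} {T M : SimpleGraph V} {u v a b : V}

def exchange (T : SimpleGraph V) (e f : Sym2 V) : SimpleGraph V :=
  fromEdgeSet (insert f T.edgeSet \ {e})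

lemma edgeSet_exchange (e : Sym2 V) (hab : a ≠ b) :
    (T.exchange e s(a, b)).edgeSet = insert s(a, b) T.edgeSet \ {e} := by
  refine (edgeSet_fromEdgeSet _).trans (sdiff_eq_left.mpr (Set.disjoint_left.mpr ?_))
  rintro g ⟨rfl | hg, -⟩
  · simpa using hab
  · exact T.not_isDiag_of_mem_edgeSet hg

lemma Connected.reachable_deleteEdges_left_or_right (hT : T.Connected) (u v x : V) :
    (T.deleteEdges {s(u, v)}).Reachable x u ∨ (T.deleteEdges {s(u, v)}).Reachable x v := by
  simp only [reachable_deleteEdges_iff_exists_walk]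
  obtain ⟨p, hp⟩ := hT.exists_isPath x u
  by_cases huv : s(u, v) ∈ p.edges
  · have hv := p.snd_mem_support_of_mem_edges huv
    have hu := Walk.endpoint_notMem_support_takeUntil hp hv (p.adj_of_mem_edges huv).ne
    exact Or.inr ⟨p.takeUntil v hv, fun h ↦ hu (Walk.fst_mem_support_of_mem_edges _ h)⟩
  · exact Or.inl ⟨p, huv⟩

lemma IsAcyclic.not_reachable_deleteEdges_of_mem_edges_s15 (hT : T.IsAcyclic) {p : T.Walk u v}
    (hp : p.IsPath) (hab : s(a, b) ∈ p.edges) : ¬ (T.deleteEdges {s(a, b)}).Reachable u v := by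
  rw [reachable_deleteEdges_iff_exists_walk]
  rintro ⟨q, hq⟩
  have hpq : p = q.toPath :=
    congrArg Subtype.val ((hT.subsingleton_path u v).elim ⟨p, hp⟩ q.toPath)
  exact hq (q.edges_toPath_subset_edges (hpq ▸ hab))

lemma IsTree.exchange [Finite V] (hT : T.IsTree) (he : T.Adj u v) (hf : ¬ T.Adj a b)
    (hcross : ¬ (T.deleteEdges {s(u, v)}).Reachable a b) :
    (T.exchange s(u, v) s(a, b)).IsTree := by
  set H := T.deleteEdges {s(u, v)}
  set A := T.exchange s(u, v) s(a, b)
  have hab : a ≠ b := by rintro rfl; exact hcross .rfl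
  have hfT : s(a, b) ∉ T.edgeSet := hf
  have hfe : s(a, b) ≠ s(u, v) := fun h ↦ hfT (h ▸ he)
  have hHA : H ≤ A := edgeSet_subset_edgeSet.mp <| by
    rw [edgeSet_deleteEdges, edgeSet_exchange _ hab]
    exact Set.sdiff_subset_sdiff_left (Set.subset_insert _ _)
  have hA : A.Adj a b := by
    rw [← mem_edgeSet, edgeSet_exchange _ hab]
    exact ⟨Set.mem_insert _ _, hfe⟩
  have hside := hT.connected.reachable_deleteEdges_left_or_right u v
  have huv : A.Reachable u v := by
    rcases hside a with hau | hav <;> rcases hside b with hbu | hbv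
    · exact absurd (hau.trans hbu.symm) hcross
    · exact (hau.symm.mono hHA).trans (hA.reachable.trans (hbv.mono hHA))
    · exact (hbu.symm.mono hHA).trans (hA.symm.reachable.trans (hav.mono hHA))
    · exact absurd (hav.trans hbv.symm) hcross
  have hAu (x : V) : A.Reachable x u :=
    (hside x).elim (·.mono hHA) fun hxv ↦ (hxv.mono hHA).trans huv.symm
  have := hT.connected.nonempty
  refine isTree_iff_connected_and_card.mpr ⟨.mk fun x y ↦ (hAu x).trans (hAu y).symm, ?_⟩
  rw [edgeSet_exchange _ hab, Nat.card_coe_set_eq, Set.ncard_exchange' hfT he,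
    ← Nat.card_coe_set_eq]
  exact (isTree_iff_connected_and_card.mp hT).2

lemma IsTree.exists_crossing_edge (hT : T.IsTree) (hM : M.IsTree) (he : T.Adj u v)
    (heM : ¬ M.Adj u v) :
    ∃ a b, M.Adj a b ∧ ¬ T.Adj a b ∧ ¬ (T.deleteEdges {s(u, v)}).Reachable a b ∧
      ¬ (M.deleteEdges {s(a, b)}).Reachable u v := by
  set H := T.deleteEdges {s(u, v)}
  obtain ⟨p, hp⟩ := hM.connected.exists_isPath u v
  have hbridge : ¬ H.Reachable u v :=
    isBridge_iff.mp (isAcyclic_iff_forall_adj_isBridge.mp hT.isAcyclic he)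
  obtain ⟨d, hd, ha, hb⟩ := p.exists_boundary_dart {x | H.Reachable u x} .rfl hbridge
  have hcross : ¬ H.Reachable d.fst d.snd := fun h ↦ hb (ha.trans h)
  refine ⟨d.fst, d.snd, d.adj, fun hT' ↦ hcross (Adj.reachable ?_), hcross,
    hM.isAcyclic.not_reachable_deleteEdges_of_mem_edges_s15 hp (List.mem_map_of_mem hd)⟩
  refine (deleteEdges_adj ..).mpr ⟨hT', fun h ↦ heM ?_⟩
  rw [← mem_edgeSet, ← Set.mem_singleton_iff.mp h]
  exact d.adj

end SimpleGraph

section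

variable {V : Type*} {G T : SimpleGraph V} {u v a b : V}

lemma IsSpanningTree.exchange [Finite V] (hT : IsSpanningTree G T) (he : T.Adj u v)
    (hf : G.Adj a b) (hfT : ¬ T.Adj a b) (hcross : ¬ (T.deleteEdges {s(u, v)}).Reachable a b) :
    IsSpanningTree G (T.exchange s(u, v) s(a, b)) := by
  refine ⟨edgeSet_subset_edgeSet.mp ?_, hT.2.exchange he hfT hcross⟩
  rw [edgeSet_exchange _ hf.ne]
  exact Set.sdiff_subset.trans (Set.insert_subset hf (edgeSet_mono hT.1))

lemma treeWeight_exchange [Fintype V] (w : Sym2 V → ℝ) (he : T.Adj u v) (hf : ¬ T.Adj a b)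
    (hab : a ≠ b) :
    treeWeight (T.exchange s(u, v) s(a, b)) w = treeWeight T w + w s(a, b) - w s(u, v) := by
  have hedges : (T.exchange s(u, v) s(a, b)).edgeFinset =
      insert s(a, b) T.edgeFinset \ {s(u, v)} := by
    ext g
    simp [edgeSet_exchange _ hab]
  have he' : {s(u, v)} ⊆ insert s(a, b) T.edgeFinset :=
    Finset.singleton_subset_iff.mpr (Finset.mem_insert_of_mem (by simpa using he))
  rw [treeWeight, hedges, Finset.sum_sdiff_eq_sub he', Finset.sum_insert (by simpa using hf),
    Finset.sum_singleton, treeWeight]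
  ring

end

theorem mst_symmetric_difference_general {V : Type*} [Fintype V] [DecidableEq V]
    (G T M : SimpleGraph V) (w : Sym2 V → ℝ)
    (hw : ∀ e ∈ G.edgeSet, ∀ f ∈ G.edgeSet, w e = w f → e = f)
    (hT : IsSpanningTree G T)
    (hM : IsSpanningTree G M ∧
      ∀ T' : SimpleGraph V, IsSpanningTree G T' → treeWeight M w ≤ treeWeight T' w) :
    (M.edgeFinset \ T.edgeFinset).card = (T.edgeFinset \ M.edgeFinset).card ∧
    ∀ e ∈ T.edgeFinset \ M.edgeFinset, ∃ f : Sym2 V, IsSwap G T e f ∧ w f < w e := by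
  obtain ⟨hMG, hMmin⟩ := hM
  refine ⟨Finset.card_sdiff_comm ?_, fun e he ↦ ?_⟩
  · have := hT.2.card_edgeFinset
    have := hMG.2.card_edgeFinset
    omega
  induction e using Sym2.ind with | h u v => ?_
  simp only [Finset.mem_sdiff, mem_edgeFinset, mem_edgeSet] at he
  obtain ⟨heT, heM⟩ := he
  obtain ⟨a, b, hab, habT, hcrossT, hcrossM⟩ := hT.2.exists_crossing_edge hMG.2 heT heM
  refine ⟨s(a, b), ⟨heT, hMG.1 hab, habT, hT.exchange heT (hMG.1 hab) habT hcrossT⟩, ?_⟩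
  have hle := hMmin _ (hMG.exchange hab (hT.1 heT) heM hcrossM)
  rw [treeWeight_exchange w hab heM (hT.1 heT).ne] at hle
  have hne : w s(a, b) ≠ w s(u, v) := fun h ↦ heM <| by
    rw [← mem_edgeSet, ← hw _ (hMG.1 hab) _ (hT.1 heT) h]
    exact hab
  exact lt_of_le_of_ne (by linarith) hne

/-- The number of edges of the minimum spanning tree `M` not in the spanning tree
`T` equals the number of edges of `T` not in `M`, and every edge of `T \ M`
participates in a violated swap constraint (a swap `(e,f)` with `w f < w e`). -/
theorem mst_symmetric_difference {V : Type*} [Fintype V] [DecidableEq V]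
    (G T M : SimpleGraph V) (w : Sym2 V → ℝ)
    (hw : ∀ e ∈ G.edgeSet, ∀ f ∈ G.edgeSet, w e = w f → e = f)
    (hG : G.Connected) (hT : IsSpanningTree G T)
    (hM : IsSpanningTree G M ∧
      ∀ T' : SimpleGraph V, IsSpanningTree G T' → treeWeight M w ≤ treeWeight T' w) :
    (M.edgeFinset \ T.edgeFinset).card = (T.edgeFinset \ M.edgeFinset).card ∧
    ∀ e ∈ T.edgeFinset \ M.edgeFinset, ∃ f : Sym2 V, IsSwap G T e f ∧ w f < w e :=
  mst_symmetric_difference_general G T M w hw hT hM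
end

section
/- If an evaluation function assigns to every position in the unavoidable set A (for the correct move, from the moving player's perspective at depth D) a value strictly greater than its value on every position in the unavoidable set B (for all other moves, from the opponent's perspective), then depth-D minimax search using this evaluation selects the correct move: the minimax value of the correct move exceeds the minimax value of every other move. -/
/-- A finite game tree: leaves carry positions of type `α`, internal nodes have a
nonempty finite list of children. -/
inductive GameTree (α : Type*) where
  | leaf : α → GameTree α
  | node : (n : ℕ) → (Fin (n + 1) → GameTree α) → GameTree α

/-- Minimax value of a game tree with static evaluation `ev` at the leaves;
the boolean argument records whose turn it is (`true` = the root/max player). -/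
noncomputable def minimax {α : Type*} (ev : α → ℝ) : Bool → GameTree α → ℝ
  | _, .leaf x => ev x
  | true, .node _ c =>
      Finset.univ.sup' Finset.univ_nonempty fun i => minimax ev false (c i)
  | false, .node _ c =>
      Finset.univ.inf' Finset.univ_nonempty fun i => minimax ev true (c i)

/-- `ForcesBy A who turn t`: in the game tree `t` with `turn` to move, the player
`who` has a strategy guaranteeing that the leaf reached lies in `A`, whatever the
other player does (`A` is unavoidable for `who`). -/
def ForcesBy {α : Type*} (A : Set α) (who : Bool) : Bool → GameTree α → Prop
  | _, .leaf x => x ∈ A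
  | turn, .node _ c =>
      if turn = who then ∃ i, ForcesBy A who (!turn) (c i)
      else ∀ i, ForcesBy A who (!turn) (c i)

lemma forces_true_lower {α : Type*} (ev : α → ℝ) (A : Finset α) (hA : A.Nonempty) :
    ∀ (turn : Bool) (t : GameTree α), ForcesBy (↑A) true turn t →
      A.inf' hA ev ≤ minimax ev turn t := by
  intro turn t
  induction t generalizing turn with
  | leaf x => intro h; simp only [minimax]; exact Finset.inf'_le ev h
  | node n c ih =>
    intro h
    cases turn with
    | true =>
      simp only [ForcesBy, if_pos rfl] at h
      obtain ⟨i, hi⟩ := h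
      refine le_trans (ih i false hi) ?_
      show minimax ev false (c i) ≤
        Finset.univ.sup' Finset.univ_nonempty fun j => minimax ev false (c j)
      exact Finset.le_sup' (fun j => minimax ev false (c j)) (Finset.mem_univ i)
    | false =>
      simp only [ForcesBy] at h
      show (Finset.univ.inf' Finset.univ_nonempty fun j => minimax ev true (c j)) ≥ _
      exact Finset.le_inf' _ _ fun i _ => ih i true (h i)

lemma forces_false_upper {α : Type*} (ev : α → ℝ) (B : Finset α) (hB : B.Nonempty) :
    ∀ (turn : Bool) (t : GameTree α), ForcesBy (↑B) false turn t →
      minimax ev turn t ≤ B.sup' hB ev := by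
  intro turn t
  induction t generalizing turn with
  | leaf x => intro h; simp only [minimax]; exact Finset.le_sup' ev h
  | node n c ih =>
    intro h
    cases turn with
    | false =>
      simp only [ForcesBy, if_pos rfl] at h
      obtain ⟨i, hi⟩ := h
      refine le_trans ?_ (ih i true hi)
      show (Finset.univ.inf' Finset.univ_nonempty fun j => minimax ev true (c j)) ≤
        minimax ev true (c i)
      exact Finset.inf'_le (fun j => minimax ev true (c j)) (Finset.mem_univ i)
    | true =>
      simp only [ForcesBy] at h
      show (Finset.univ.sup' Finset.univ_nonempty fun j => minimax ev false (c j)) ≤ _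
      exact Finset.sup'_le _ _ fun i _ => ih i false (h i)

/-- If an evaluation function values every position of the unavoidable set `A`
(for the correct move `i₀`, forced by the root player in the subtree `c i₀`)
strictly above every position of the unavoidable set `B` (forced by the opponent
in the subtrees of all other moves), then minimax search using this evaluation
selects the correct move: the minimax value of the correct move exceeds that of
every other move. -/
theorem minimax_selects_correct_move {α : Type*} (ev : α → ℝ)
    (A B : Finset α) (hA : A.Nonempty) (hB : B.Nonempty)
    (n : ℕ) (c : Fin (n + 1) → GameTree α) (i₀ : Fin (n + 1))
    (hgood : ForcesBy (↑A) true false (c i₀))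
    (hbad : ∀ i : Fin (n + 1), i ≠ i₀ → ForcesBy (↑B) false false (c i))
    (hsep : ∀ a ∈ A, ∀ b ∈ B, ev b < ev a) :
    ∀ i : Fin (n + 1), i ≠ i₀ → minimax ev false (c i) < minimax ev false (c i₀) := by
  intro i hi
  have h1 : minimax ev false (c i) ≤ B.sup' hB ev :=
    forces_false_upper ev B hB false (c i) (hbad i hi)
  have h2 : A.inf' hA ev ≤ minimax ev false (c i₀) :=
    forces_true_lower ev A hA false (c i₀) hgood
  have h3 : B.sup' hB ev < A.inf' hA ev := by
    rw [Finset.sup'_lt_iff]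
    intro b hb
    rw [Finset.lt_inf'_iff]
    intro a ha
    exact hsep a ha b hb
  linarith
end
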